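/- arXiv:1707.08644 — 12 statements merged into one kernel-verified Lean document; each statement's English description precedes it below -/
import Mathlib

section
/- Let X be a real random variable with mean μ, supported on an interval (a,b) (with -∞ ≤ a < b ≤ ∞), having finite variance. Let φ be twice differentiable on (a,b), and define h(x) = (φ(x) - φ(μ))/(x-μ)² - φ'(μ)/(x-μ) for x ≠ μ. Then E[φ(X)] - φ(μ) ≤ (sup_{x∈(a,b)} h(x)) · Var(X). -/
open MeasureTheory

/-! The bound on `h` says exactly that on `(a, b)` the function `φ` lies below the parabola
`φ μ + φ' μ (x - μ) + C (x - μ)²`. Taking expectations, the linear term vanishes because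
`E[X] = μ`, and the quadratic term becomes `C · Var(X)`. -/

lemma le_add_mul_add_mul_sq_of_slope_bound {φ : ℝ → ℝ} {μ d C x : ℝ}
    (h : x ≠ μ → (φ x - φ μ) / (x - μ) ^ 2 - d / (x - μ) ≤ C) :
    φ x ≤ φ μ + d * (x - μ) + C * (x - μ) ^ 2 := by
  rcases eq_or_ne x μ with rfl | hx
  · simp
  have hx' : x - μ ≠ 0 := sub_ne_zero.mpr hx
  have hrw : (φ x - φ μ) / (x - μ) ^ 2 - d / (x - μ)
      = (φ x - φ μ - d * (x - μ)) / (x - μ) ^ 2 := by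
    field_simp
  have := h hx
  rw [hrw, div_le_iff₀ (by positivity)] at this
  linarith

lemma MeasureTheory.Integrable.sub_const_sq {Ω : Type*} [MeasurableSpace Ω] {P : Measure Ω}
    [IsFiniteMeasure P] {X : Ω → ℝ} (hX : Integrable X P)
    (hX2 : Integrable (fun ω => X ω ^ 2) P)
    (c : ℝ) : Integrable (fun ω => (X ω - c) ^ 2) P := by
  have heq : (fun ω => (X ω - c) ^ 2) = fun ω => X ω ^ 2 - 2 * c * X ω + c ^ 2 := by
    funext ω; ring
  rw [heq]
  exact (hX2.sub (hX.const_mul _)).add (integrable_const _)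

lemma integral_sub_le_mul_integral_sq_of_ae_le {Ω : Type*} [MeasurableSpace Ω] {P : Measure Ω}
    [IsProbabilityMeasure P] {X Y : Ω → ℝ} {μ p d C : ℝ}
    (hX : Integrable X P) (hmean : ∫ ω, X ω ∂P = μ)
    (hsq : Integrable (fun ω => (X ω - μ) ^ 2) P) (hY : Integrable Y P)
    (hle : ∀ᵐ ω ∂P, Y ω ≤ p + d * (X ω - μ) + C * (X ω - μ) ^ 2) :
    ∫ ω, Y ω ∂P - p ≤ C * ∫ ω, (X ω - μ) ^ 2 ∂P := by
  have hcentered : Integrable (fun ω => X ω - μ) P := hX.sub (integrable_const μ)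
  have hlin : Integrable (fun ω => p + d * (X ω - μ)) P :=
    (integrable_const _).add (hcentered.const_mul _)
  have hquad : Integrable (fun ω => p + d * (X ω - μ) + C * (X ω - μ) ^ 2) P :=
    hlin.add (hsq.const_mul C)
  calc ∫ ω, Y ω ∂P - p ≤ ∫ ω, (p + d * (X ω - μ) + C * (X ω - μ) ^ 2) ∂P - p :=
        sub_le_sub_right (integral_mono_ae hY hquad hle) p
    _ = C * ∫ ω, (X ω - μ) ^ 2 ∂P := by
      rw [integral_add hlin (hsq.const_mul C),
        integral_add (integrable_const _) (hcentered.const_mul _), integral_const_mul,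
        integral_const_mul, integral_sub hX (integrable_const μ), hmean]
      simp

theorem stmt_0_general {Ω : Type*} [MeasureSpace Ω] [IsProbabilityMeasure (volume : Measure Ω)]
    (a b : EReal) (X : Ω → ℝ) (φ : ℝ → ℝ) (μ C : ℝ)
    (hX : ∀ᵐ ω, a < (X ω : EReal) ∧ (X ω : EReal) < b)
    (hXint : Integrable X) (hmean : ∫ ω, X ω = μ)
    (hX2 : Integrable (fun ω => (X ω) ^ 2))
    (hφint : Integrable (fun ω => φ (X ω)))
    (hC : ∀ x : ℝ, a < (x : EReal) → (x : EReal) < b → x ≠ μ →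
      (φ x - φ μ) / (x - μ) ^ 2 - deriv φ μ / (x - μ) ≤ C) :
    (∫ ω, φ (X ω)) - φ μ ≤ C * ∫ ω, (X ω - μ) ^ 2 :=
  integral_sub_le_mul_integral_sq_of_ae_le hXint hmean (hXint.sub_const_sq hX2 μ) hφint
    (hX.mono fun _ hω => le_add_mul_add_mul_sq_of_slope_bound (hC _ hω.1 hω.2))

/-- Sharpened Jensen upper bound: if `C` is an upper bound of
`h(x) = (φ(x)-φ(μ))/(x-μ)² - φ'(μ)/(x-μ)` over `x ∈ (a,b)`, `x ≠ μ`, then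
`E[φ(X)] - φ(μ) ≤ C · Var(X)`. -/
theorem stmt_0 {Ω : Type*} [MeasureSpace Ω] [IsProbabilityMeasure (volume : Measure Ω)]
    (a b : EReal) (hab : a < b) (X : Ω → ℝ) (φ : ℝ → ℝ) (μ C : ℝ)
    (hX : ∀ᵐ ω, a < (X ω : EReal) ∧ (X ω : EReal) < b)
    (hXint : Integrable X) (hmean : ∫ ω, X ω = μ)
    (hX2 : Integrable (fun ω => (X ω) ^ 2))
    (hφint : Integrable (fun ω => φ (X ω)))
    (hdiff : ∀ x : ℝ, a < (x : EReal) → (x : EReal) < b →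
      DifferentiableAt ℝ φ x ∧ DifferentiableAt ℝ (deriv φ) x)
    (hC : ∀ x : ℝ, a < (x : EReal) → (x : EReal) < b → x ≠ μ →
      (φ x - φ μ) / (x - μ) ^ 2 - deriv φ μ / (x - μ) ≤ C) :
    (∫ ω, φ (X ω)) - φ μ ≤ C * ∫ ω, (X ω - μ) ^ 2 :=
  stmt_0_general a b X φ μ C hX hXint hmean hX2 hφint hC
end

section
/- Let X be a real random variable with mean μ, supported on an interval (a,b), with finite variance. Let φ be twice differentiable on (a,b), and define h(x) = (φ(x) - φ(μ))/(x-μ)² - φ'(μ)/(x-μ) for x ≠ μ. Then (inf_{x∈(a,b)} h(x)) · Var(X) ≤ E[φ(X)] - φ(μ). -/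
/-!
The bound `h ≥ C` on `(a,b)` says that `φ` lies above the tangent parabola
`φ μ + φ'(μ) (x - μ) + C (x - μ)²` on `(a,b)`. Evaluating at `X` and taking expectations
gives the claim, since the linear term has mean `E[X - μ] = 0`.
-/

open MeasureTheory

lemma mul_sq_le_sub_sub_mul {C d x μ y : ℝ} (hx : x ≠ μ)
    (hC : C ≤ y / (x - μ) ^ 2 - d / (x - μ)) : C * (x - μ) ^ 2 ≤ y - d * (x - μ) := by
  have hx' : x - μ ≠ 0 := sub_ne_zero.mpr hx
  calc C * (x - μ) ^ 2 ≤ (y / (x - μ) ^ 2 - d / (x - μ)) * (x - μ) ^ 2 := by gcongr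
    _ = y - d * (x - μ) := by field_simp

section Expectation

variable {Ω : Type*} [MeasurableSpace Ω] {P : Measure Ω} [IsProbabilityMeasure P]
  {X : Ω → ℝ} {μ : ℝ}

lemma integrable_sub_const_sq (hX : Integrable X P) (hX2 : Integrable (fun ω => X ω ^ 2) P) :
    Integrable (fun ω => (X ω - μ) ^ 2) P :=
  (((memLp_two_iff_integrable_sq hX.aestronglyMeasurable).2 hX2).sub (memLp_const μ)).integrable_sq

lemma integral_sub_sub_mul_sub_mean (hX : Integrable X P) (hmean : ∫ ω, X ω ∂P = μ)
    {f : Ω → ℝ} (hf : Integrable f P) (c d : ℝ) :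
    ∫ ω, (f ω - c - d * (X ω - μ)) ∂P = (∫ ω, f ω ∂P) - c := by
  have hfc : Integrable (fun ω => f ω - c) P := hf.sub (integrable_const c)
  have hXμ : Integrable (fun ω => X ω - μ) P := hX.sub (integrable_const μ)
  rw [integral_sub hfc (hXμ.const_mul d), integral_sub hf (integrable_const c), integral_const_mul,
    integral_sub hX (integrable_const μ), hmean]
  simp

end Expectation

theorem stmt_1_general {Ω : Type*} [MeasureSpace Ω] [IsProbabilityMeasure (volume : Measure Ω)]
    (a b : EReal) (X : Ω → ℝ) (φ : ℝ → ℝ) (μ C : ℝ)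
    (hX : ∀ᵐ ω, a < (X ω : EReal) ∧ (X ω : EReal) < b)
    (hXint : Integrable X) (hmean : ∫ ω, X ω = μ)
    (hX2 : Integrable (fun ω => (X ω) ^ 2))
    (hφint : Integrable (fun ω => φ (X ω)))
    (hC : ∀ x : ℝ, a < (x : EReal) → (x : EReal) < b → x ≠ μ →
      (φ x - φ μ) / (x - μ) ^ 2 - deriv φ μ / (x - μ) ≥ C) :
    C * (∫ ω, (X ω - μ) ^ 2) ≤ (∫ ω, φ (X ω)) - φ μ := by
  have hremainder : Integrable (fun ω => φ (X ω) - φ μ - deriv φ μ * (X ω - μ)) :=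
    (hφint.sub (integrable_const _)).sub ((hXint.sub (integrable_const μ)).const_mul _)
  have hparabola : ∀ᵐ ω, C * (X ω - μ) ^ 2 ≤ φ (X ω) - φ μ - deriv φ μ * (X ω - μ) := by
    filter_upwards [hX] with ω ⟨ha, hb⟩
    rcases eq_or_ne (X ω) μ with h | h
    · simp [h]
    · exact mul_sq_le_sub_sub_mul h (hC _ ha hb h)
  calc C * ∫ ω, (X ω - μ) ^ 2 = ∫ ω, C * (X ω - μ) ^ 2 := (integral_const_mul _ _).symm
    _ ≤ ∫ ω, (φ (X ω) - φ μ - deriv φ μ * (X ω - μ)) :=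
      integral_mono_ae ((integrable_sub_const_sq hXint hX2).const_mul C) hremainder hparabola
    _ = (∫ ω, φ (X ω)) - φ μ := integral_sub_sub_mul_sub_mean hXint hmean hφint _ _

/-- Sharpened Jensen lower bound: if `C` is an lower bound of
`h(x) = (φ(x)-φ(μ))/(x-μ)² - φ'(μ)/(x-μ)` over `x ∈ (a,b)`, `x ≠ μ`, then
`C · Var(X) ≤ E[φ(X)] - φ(μ)`. -/
theorem stmt_1 {Ω : Type*} [MeasureSpace Ω] [IsProbabilityMeasure (volume : Measure Ω)]
    (a b : EReal) (hab : a < b) (X : Ω → ℝ) (φ : ℝ → ℝ) (μ C : ℝ)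
    (hX : ∀ᵐ ω, a < (X ω : EReal) ∧ (X ω : EReal) < b)
    (hXint : Integrable X) (hmean : ∫ ω, X ω = μ)
    (hX2 : Integrable (fun ω => (X ω) ^ 2))
    (hφint : Integrable (fun ω => φ (X ω)))
    (hdiff : ∀ x : ℝ, a < (x : EReal) → (x : EReal) < b →
      DifferentiableAt ℝ φ x ∧ DifferentiableAt ℝ (deriv φ) x)
    (hC : ∀ x : ℝ, a < (x : EReal) → (x : EReal) < b → x ≠ μ →
      (φ x - φ μ) / (x - μ) ^ 2 - deriv φ μ / (x - μ) ≥ C) :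
    C * (∫ ω, (X ω - μ) ^ 2) ≤ (∫ ω, φ (X ω)) - φ μ :=
  stmt_1_general a b X φ μ C hX hXint hmean hX2 hφint hC
end

section
/- Let X be a random variable supported on (a,b) with mean μ and finite variance, and let φ be twice differentiable on (a,b). Then (inf_{x∈(a,b)} φ''(x)/2) · Var(X) ≤ E[φ(X)] - φ(μ) ≤ (sup_{x∈(a,b)} φ''(x)/2) · Var(X). -/
/-!
If `m ≤ φ''/2` on the interval, then `x ↦ φ x - m (x - μ)²` is convex there, so it lies above its
tangent line at `μ`; the mean `μ` does lie in the interval, since an open interval is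
order-connected and `X` takes values both `≤ μ` and `≥ μ` with positive probability. Taking
expectations of `φ X ≥ φ μ + φ' μ (X - μ) + m (X - μ)²` kills the linear term. The upper bound is
the same argument for `-φ`.
-/

open MeasureTheory Set

theorem Set.OrdConnected.integral_mem {Ω : Type*} [MeasurableSpace Ω] {P : Measure Ω}
    [IsProbabilityMeasure P] {s : Set ℝ} (hs : s.OrdConnected) {X : Ω → ℝ}
    (hX : Integrable X P) (hXs : ∀ᵐ ω ∂P, X ω ∈ s) : ∫ ω, X ω ∂P ∈ s := by
  obtain ⟨ω₁, hω₁, hω₁s⟩ := Measure.exists_mem_of_measure_ne_zero_of_ae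
    (measure_le_integral_pos hX).ne' (ae_restrict_of_ae hXs)
  obtain ⟨ω₂, hω₂, hω₂s⟩ := Measure.exists_mem_of_measure_ne_zero_of_ae
    (measure_integral_le_pos hX).ne' (ae_restrict_of_ae hXs)
  exact hs.out hω₁s hω₂s ⟨hω₁, hω₂⟩

theorem ConvexOn.add_mul_sub_le_of_hasDerivAt {S : Set ℝ} {f : ℝ → ℝ} {x y f' : ℝ}
    (hf : ConvexOn ℝ S f) (hx : x ∈ S) (hy : y ∈ S) (hd : HasDerivAt f f' x) :
    f x + f' * (y - x) ≤ f y := by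
  rcases lt_trichotomy x y with hxy | rfl | hyx
  · have := hf.le_slope_of_hasDerivAt hx hy hxy hd
    rw [slope_def_field, le_div_iff₀ (sub_pos.2 hxy)] at this
    linarith
  · simp
  · have := hf.slope_le_of_hasDerivAt hy hx hyx hd
    rw [slope_def_field, div_le_iff₀ (sub_pos.2 hyx)] at this
    linarith

theorem taylor_lower_bound_of_le_deriv2 {S : Set ℝ} (hS : Convex ℝ S)
    {φ : ℝ → ℝ} {m x₀ x : ℝ} (hd : ∀ y ∈ S, DifferentiableAt ℝ φ y)
    (hd' : ∀ y ∈ S, DifferentiableAt ℝ (deriv φ) y) (hm : ∀ y ∈ S, m ≤ deriv (deriv φ) y / 2)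
    (hx₀ : x₀ ∈ S) (hx : x ∈ S) :
    m * (x - x₀) ^ 2 + deriv φ x₀ * (x - x₀) + φ x₀ ≤ φ x := by
  have hψ' : ∀ y ∈ S, HasDerivAt (fun y => φ y - m * (y - x₀) ^ 2)
      (deriv φ y - 2 * m * (y - x₀)) y := fun y hy => by
    refine ((hd y hy).hasDerivAt.sub
      ((((hasDerivAt_id y).sub_const x₀).pow 2).const_mul m)).congr_deriv ?_
    simp only [id, Nat.cast_ofNat, Nat.add_one_sub_one, pow_one, mul_one]; ring
  have hψ'' : ∀ y ∈ S, HasDerivAt (fun y => deriv φ y - 2 * m * (y - x₀))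
      (deriv (deriv φ) y - 2 * m) y := fun y hy => by
    exact ((hd' y hy).hasDerivAt.sub
      (((hasDerivAt_id y).sub_const x₀).const_mul (2 * m))).congr_deriv (by rw [mul_one])
  have hψ : ConvexOn ℝ S (fun y => φ y - m * (y - x₀) ^ 2) := by
    refine convexOn_of_hasDerivWithinAt2_nonneg hS
      (fun y hy => (hψ' y hy).continuousAt.continuousWithinAt)
      (fun y hy => (hψ' y (interior_subset hy)).hasDerivWithinAt)
      (fun y hy => (hψ'' y (interior_subset hy)).hasDerivWithinAt) fun y hy => ?_
    linarith [hm y (interior_subset hy)]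
  have := hψ.add_mul_sub_le_of_hasDerivAt hx₀ hx (hψ' x₀ hx₀)
  simp only [sub_self, mul_zero, sub_zero, zero_pow two_ne_zero] at this
  linarith

theorem taylor_upper_bound_of_deriv2_le {S : Set ℝ} (hS : Convex ℝ S)
    {φ : ℝ → ℝ} {M x₀ x : ℝ} (hd : ∀ y ∈ S, DifferentiableAt ℝ φ y)
    (hd' : ∀ y ∈ S, DifferentiableAt ℝ (deriv φ) y) (hM : ∀ y ∈ S, deriv (deriv φ) y / 2 ≤ M)
    (hx₀ : x₀ ∈ S) (hx : x ∈ S) :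
    φ x ≤ M * (x - x₀) ^ 2 + deriv φ x₀ * (x - x₀) + φ x₀ := by
  have := taylor_lower_bound_of_le_deriv2 hS (φ := -φ) (m := -M)
    (fun y hy => (hd y hy).neg) (by simpa using fun y hy => (hd' y hy).neg)
    (by simpa [neg_div] using hM) hx₀ hx
  simp only [deriv.neg', Pi.neg_apply] at this
  linarith

section
variable {Ω : Type*} [MeasurableSpace Ω] {P : Measure Ω} [IsProbabilityMeasure P] {X f : Ω → ℝ}
  {μ : ℝ}

theorem integrable_sq_sub_const (hX : Integrable X P) (hX2 : Integrable (fun ω => X ω ^ 2) P)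
    (c : ℝ) : Integrable (fun ω => (X ω - c) ^ 2) P :=
  (((memLp_two_iff_integrable_sq hX.aestronglyMeasurable).2 hX2).sub (memLp_const c)).integrable_sq

theorem integrable_and_integral_quadratic_sub_mean (hX : Integrable X P) (hmean : ∫ ω, X ω ∂P = μ)
    (hX2 : Integrable (fun ω => (X ω - μ) ^ 2) P) (m c d : ℝ) :
    Integrable (fun ω => m * (X ω - μ) ^ 2 + c * (X ω - μ) + d) P ∧
      ∫ ω, m * (X ω - μ) ^ 2 + c * (X ω - μ) + d ∂P = m * ∫ ω, (X ω - μ) ^ 2 ∂P + d := by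
  have h1 : Integrable (fun ω => m * (X ω - μ) ^ 2) P := hX2.const_mul m
  have h2 : Integrable (fun ω => c * (X ω - μ)) P := (hX.sub (integrable_const μ)).const_mul c
  have h12 : Integrable (fun ω => m * (X ω - μ) ^ 2 + c * (X ω - μ)) P := h1.add h2
  refine ⟨h12.add (integrable_const d), ?_⟩
  rw [integral_add h12 (integrable_const d), integral_add h1 h2, integral_const_mul,
    integral_const_mul, integral_sub hX (integrable_const μ), hmean]
  simp

theorem mul_integral_sq_sub_add_le_integral (hX : Integrable X P) (hmean : ∫ ω, X ω ∂P = μ)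
    (hX2 : Integrable (fun ω => (X ω - μ) ^ 2) P) (hf : Integrable f P) {m c d : ℝ}
    (hle : ∀ᵐ ω ∂P, m * (X ω - μ) ^ 2 + c * (X ω - μ) + d ≤ f ω) :
    m * ∫ ω, (X ω - μ) ^ 2 ∂P + d ≤ ∫ ω, f ω ∂P := by
  obtain ⟨hint, heq⟩ := integrable_and_integral_quadratic_sub_mean hX hmean hX2 m c d
  exact heq ▸ integral_mono_ae hint hf hle

theorem integral_le_mul_integral_sq_sub_add (hX : Integrable X P) (hmean : ∫ ω, X ω ∂P = μ)
    (hX2 : Integrable (fun ω => (X ω - μ) ^ 2) P) (hf : Integrable f P) {M c d : ℝ}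
    (hle : ∀ᵐ ω ∂P, f ω ≤ M * (X ω - μ) ^ 2 + c * (X ω - μ) + d) :
    ∫ ω, f ω ∂P ≤ M * ∫ ω, (X ω - μ) ^ 2 ∂P + d := by
  obtain ⟨hint, heq⟩ := integrable_and_integral_quadratic_sub_mean hX hmean hX2 M c d
  exact heq ▸ integral_mono_ae hf hint hle

end

theorem stmt_3_general {Ω : Type*} [MeasureSpace Ω] [IsProbabilityMeasure (volume : Measure Ω)]
    (a b : EReal) (X : Ω → ℝ) (φ : ℝ → ℝ) (μ m M : ℝ)
    (hX : ∀ᵐ ω, a < (X ω : EReal) ∧ (X ω : EReal) < b)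
    (hXint : Integrable X) (hmean : ∫ ω, X ω = μ)
    (hX2 : Integrable (fun ω => (X ω) ^ 2))
    (hφint : Integrable (fun ω => φ (X ω)))
    (hdiff : ∀ x : ℝ, a < (x : EReal) → (x : EReal) < b →
      DifferentiableAt ℝ φ x ∧ DifferentiableAt ℝ (deriv φ) x)
    (hm : ∀ x : ℝ, a < (x : EReal) → (x : EReal) < b → m ≤ deriv (deriv φ) x / 2)
    (hM : ∀ x : ℝ, a < (x : EReal) → (x : EReal) < b → deriv (deriv φ) x / 2 ≤ M) :
    m * (∫ ω, (X ω - μ) ^ 2) ≤ (∫ ω, φ (X ω)) - φ μ ∧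
      (∫ ω, φ (X ω)) - φ μ ≤ M * ∫ ω, (X ω - μ) ^ 2 := by
  set S : Set ℝ := ((↑) : ℝ → EReal) ⁻¹' Ioo a b
  have hS : S.OrdConnected := ordConnected_Ioo.preimage_mono EReal.coe_strictMono.monotone
  have hμ : μ ∈ S := hmean ▸ hS.integral_mem hXint hX
  have hd : ∀ x ∈ S, DifferentiableAt ℝ φ x := fun x hx => (hdiff x hx.1 hx.2).1
  have hd' : ∀ x ∈ S, DifferentiableAt ℝ (deriv φ) x := fun x hx => (hdiff x hx.1 hx.2).2
  have hQ := integrable_sq_sub_const hXint hX2 μ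
  constructor
  · have := mul_integral_sq_sub_add_le_integral hXint hmean hQ hφint <| hX.mono fun ω hω =>
      taylor_lower_bound_of_le_deriv2 hS.convex hd hd' (fun x hx => hm x hx.1 hx.2) hμ hω
    linarith
  · have := integral_le_mul_integral_sq_sub_add hXint hmean hQ hφint <| hX.mono fun ω hω =>
      taylor_upper_bound_of_deriv2_le hS.convex hd hd' (fun x hx => hM x hx.1 hx.2) hμ hω
    linarith

/-- Cruder sharpened Jensen bounds via bounds on `φ''/2`: if `m ≤ φ''(x)/2 ≤ M`
on `(a,b)` then `m · Var(X) ≤ E[φ(X)] - φ(μ) ≤ M · Var(X)`. -/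
theorem stmt_3 {Ω : Type*} [MeasureSpace Ω] [IsProbabilityMeasure (volume : Measure Ω)]
    (a b : EReal) (hab : a < b) (X : Ω → ℝ) (φ : ℝ → ℝ) (μ m M : ℝ)
    (hX : ∀ᵐ ω, a < (X ω : EReal) ∧ (X ω : EReal) < b)
    (hXint : Integrable X) (hmean : ∫ ω, X ω = μ)
    (hX2 : Integrable (fun ω => (X ω) ^ 2))
    (hφint : Integrable (fun ω => φ (X ω)))
    (hdiff : ∀ x : ℝ, a < (x : EReal) → (x : EReal) < b →
      DifferentiableAt ℝ φ x ∧ DifferentiableAt ℝ (deriv φ) x)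
    (hm : ∀ x : ℝ, a < (x : EReal) → (x : EReal) < b → m ≤ deriv (deriv φ) x / 2)
    (hM : ∀ x : ℝ, a < (x : EReal) → (x : EReal) < b → deriv (deriv φ) x / 2 ≤ M) :
    m * (∫ ω, (X ω - μ) ^ 2) ≤ (∫ ω, φ (X ω)) - φ μ ∧
      (∫ ω, φ (X ω)) - φ μ ≤ M * ∫ ω, (X ω - μ) ^ 2 :=
  stmt_3_general a b X φ μ m M hX hXint hmean hX2 hφint hdiff hm hM
end

section
/- Let x₁,…,xₙ be real numbers in [a,b] where a is their minimum and b their maximum, let x̄ be their arithmetic mean, S² = (1/n)∑(xᵢ - x̄)² their empirical variance, and φ twice differentiable on an open interval containing [a,b]. Define h(x) = (φ(x)-φ(x̄))/(x-x̄)² - φ'(x̄)/(x-x̄). Then (inf_{x∈[a,b], x≠x̄} h(x)) · S² ≤ (1/n)∑φ(xᵢ) - φ(x̄) ≤ (sup_{x∈[a,b], x≠x̄} h(x)) · S². -/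
open Set Finset

/-!
Writing `t = y - x̄`, the hypothesis `m ≤ h(y)` says exactly
`m t² ≤ φ y - φ x̄ - φ'(x̄) t` (also trivially at `t = 0`). Summing over the sample,
the linear terms cancel because the deviations from the mean sum to zero, leaving
`m ∑ tᵢ² ≤ ∑ φ(xᵢ) - n φ(x̄)`. The upper bound is the lower bound for `-φ`.
-/

lemma div_sq_sub_div_eq (u t d : ℝ) : u / t ^ 2 - d / t = (u - d * t) / t ^ 2 := by
  rcases eq_or_ne t 0 with rfl | ht
  · simp
  · field_simp

lemma mul_sq_le_sub_sub_mul_s4 {f : ℝ → ℝ} {c d m y : ℝ}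
    (hm : y ≠ c → m ≤ (f y - f c) / (y - c) ^ 2 - d / (y - c)) :
    m * (y - c) ^ 2 ≤ f y - f c - d * (y - c) := by
  rcases eq_or_ne y c with rfl | hy
  · simp
  · have hpos : 0 < (y - c) ^ 2 := by positivity [sub_ne_zero.mpr hy]
    rw [← le_div_iff₀ hpos, ← div_sq_sub_div_eq]
    exact hm hy

namespace Finset

variable {ι : Type*} (s : Finset ι) (x : ι → ℝ)

lemma sum_sub_div_card_eq_zero (hs : s.Nonempty) :
    ∑ i ∈ s, (x i - (∑ j ∈ s, x j) / #s) = 0 := by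
  have hcard : (#s : ℝ) ≠ 0 := by exact_mod_cast hs.card_ne_zero
  rw [sum_sub_distrib, sum_const, nsmul_eq_mul, mul_div_cancel₀ _ hcard, sub_self]

lemma sum_comp_sub_card_mul_eq_sum_sub_sub_mul (f : ℝ → ℝ) (c d : ℝ)
    (hc : ∑ i ∈ s, (x i - c) = 0) :
    ∑ i ∈ s, f (x i) - #s * f c = ∑ i ∈ s, (f (x i) - f c - d * (x i - c)) := by
  rw [sum_sub_distrib, sum_sub_distrib, ← mul_sum, hc, sum_const, nsmul_eq_mul]
  ring

variable {s x} {c : ℝ}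

lemma mul_sum_sq_le_sum_comp_sub (hs : s.Nonempty) (hc : c = (∑ j ∈ s, x j) / #s)
    {f : ℝ → ℝ} {d m : ℝ}
    (hm : ∀ i ∈ s, x i ≠ c → m ≤ (f (x i) - f c) / (x i - c) ^ 2 - d / (x i - c)) :
    m * ((∑ i ∈ s, (x i - c) ^ 2) / #s) ≤ (∑ i ∈ s, f (x i)) / #s - f c := by
  have hcard : (0 : ℝ) < #s := by exact_mod_cast hs.card_pos
  have hsum : m * ∑ i ∈ s, (x i - c) ^ 2 ≤ ∑ i ∈ s, f (x i) - #s * f c := by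
    rw [sum_comp_sub_card_mul_eq_sum_sub_sub_mul s x f c d
      (hc ▸ sum_sub_div_card_eq_zero s x hs), mul_sum]
    exact sum_le_sum fun i hi => mul_sq_le_sub_sub_mul_s4 (hm i hi)
  calc m * ((∑ i ∈ s, (x i - c) ^ 2) / #s) = (m * ∑ i ∈ s, (x i - c) ^ 2) / #s := by ring
    _ ≤ (∑ i ∈ s, f (x i) - #s * f c) / #s := by gcongr
    _ = (∑ i ∈ s, f (x i)) / #s - f c := by field_simp

lemma sum_comp_sub_le_mul_sum_sq (hs : s.Nonempty) (hc : c = (∑ j ∈ s, x j) / #s)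
    {f : ℝ → ℝ} {d M : ℝ}
    (hM : ∀ i ∈ s, x i ≠ c → (f (x i) - f c) / (x i - c) ^ 2 - d / (x i - c) ≤ M) :
    (∑ i ∈ s, f (x i)) / #s - f c ≤ M * ((∑ i ∈ s, (x i - c) ^ 2) / #s) := by
  have hneg := mul_sum_sq_le_sum_comp_sub hs hc (f := -f) (d := -d) (m := -M) fun i hi hic => by
    have hneg_quot : (-f (x i) - -f c) / (x i - c) ^ 2 - -d / (x i - c)
        = -((f (x i) - f c) / (x i - c) ^ 2 - d / (x i - c)) := by ring
    simp only [Pi.neg_apply]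
    linarith [hM i hi hic]
  simp only [Pi.neg_apply, sum_neg_distrib, neg_div, neg_mul, sub_neg_eq_add] at hneg
  linarith

end Finset

theorem stmt_4_general (n : ℕ) (hn : 0 < n) (x : Fin n → ℝ) (a b : ℝ)
    (ha : IsLeast (Set.range x) a) (hb : IsGreatest (Set.range x) b)
    (φ : ℝ → ℝ)
    (xbar S2 : ℝ)
    (hxbar : xbar = (∑ i, x i) / n)
    (hS2 : S2 = (∑ i, (x i - xbar) ^ 2) / n)
    (m M : ℝ)
    (hm : ∀ y ∈ Icc a b, y ≠ xbar →
      m ≤ (φ y - φ xbar) / (y - xbar) ^ 2 - deriv φ xbar / (y - xbar))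
    (hM : ∀ y ∈ Icc a b, y ≠ xbar →
      (φ y - φ xbar) / (y - xbar) ^ 2 - deriv φ xbar / (y - xbar) ≤ M) :
    m * S2 ≤ (∑ i, φ (x i)) / n - φ xbar ∧
      (∑ i, φ (x i)) / n - φ xbar ≤ M * S2 := by
  have hmem : ∀ i, x i ∈ Icc a b := fun i => ⟨ha.2 ⟨i, rfl⟩, hb.2 ⟨i, rfl⟩⟩
  have hne : (univ : Finset (Fin n)).Nonempty := univ_nonempty_iff.mpr ⟨⟨0, hn⟩⟩
  have hmean : xbar = (∑ i, x i) / #(univ : Finset (Fin n)) := by simpa using hxbar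
  have hcard : (#(univ : Finset (Fin n)) : ℝ) = n := by simp
  rw [hS2, ← hcard]
  exact ⟨mul_sum_sq_le_sum_comp_sub hne hmean fun i _ => hm (x i) (hmem i),
    sum_comp_sub_le_mul_sum_sq hne hmean fun i _ => hM (x i) (hmem i)⟩

/-- Empirical (finite-sample) version of the sharpened Jensen inequality. -/
theorem stmt_4 (n : ℕ) (hn : 0 < n) (x : Fin n → ℝ) (a b : ℝ)
    (ha : IsLeast (Set.range x) a) (hb : IsGreatest (Set.range x) b)
    (φ : ℝ → ℝ) (U : Set ℝ) (hU : IsOpen U) (hUab : Icc a b ⊆ U)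
    (hdiff : ∀ y ∈ U, DifferentiableAt ℝ φ y ∧ DifferentiableAt ℝ (deriv φ) y)
    (xbar S2 : ℝ)
    (hxbar : xbar = (∑ i, x i) / n)
    (hS2 : S2 = (∑ i, (x i - xbar) ^ 2) / n)
    (m M : ℝ)
    (hm : ∀ y ∈ Icc a b, y ≠ xbar →
      m ≤ (φ y - φ xbar) / (y - xbar) ^ 2 - deriv φ xbar / (y - xbar))
    (hM : ∀ y ∈ Icc a b, y ≠ xbar →
      (φ y - φ xbar) / (y - xbar) ^ 2 - deriv φ xbar / (y - xbar) ≤ M) :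
    m * S2 ≤ (∑ i, φ (x i)) / n - φ xbar ∧
      (∑ i, φ (x i)) / n - φ xbar ≤ M * S2 :=
  stmt_4_general n hn x a b ha hb φ xbar S2 hxbar hS2 m M hm hM
end

section
/- Let φ be twice differentiable on (a,b) with φ' convex on (a,b), and fix μ ∈ (a,b). Then the function h(x) = (φ(x)-φ(μ))/(x-μ)² - φ'(μ)/(x-μ), defined for x ∈ (a,b), x ≠ μ, is monotonically increasing on (a,μ) and on (μ,b) (and as a function on (a,b)\{μ}). -/
/-!
Writing `φ x - φ μ = (x - μ) ∫₀¹ φ'(μ + (x - μ) t) dt` gives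
`h x = ∫₀¹ (φ'(μ + (x - μ) t) - φ'(μ)) / (x - μ) dt`, and for `t > 0` the integrand is
`t` times the secant slope of `φ'` between `μ` and `μ + (x - μ) t`. Convexity of `φ'` makes
that slope increasing in the second point, which increases with `x`; so `h` is increasing.
-/

open Set intervalIntegral

lemma Convex.add_sub_mul_mem {s : Set ℝ} (hs : Convex ℝ s) {μ x t : ℝ} (hμ : μ ∈ s)
    (hx : x ∈ s) (ht : t ∈ Icc (0 : ℝ) 1) : μ + (x - μ) * t ∈ s := by
  simpa [mul_comm] using hs.add_smul_sub_mem hμ hx ht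

lemma ContinuousOn.intervalIntegrable_comp_add_sub_mul {f : ℝ → ℝ} {s : Set ℝ}
    (hf : ContinuousOn f s) (hs : Convex ℝ s) {μ x : ℝ} (hμ : μ ∈ s) (hx : x ∈ s) :
    IntervalIntegrable (fun t => f (μ + (x - μ) * t)) MeasureTheory.volume 0 1 := by
  refine ContinuousOn.intervalIntegrable (hf.comp (by fun_prop) fun t ht => ?_)
  rw [uIcc_of_le zero_le_one] at ht
  exact hs.add_sub_mul_mem hμ hx ht

lemma sub_eq_mul_integral_deriv_comp_add_mul {φ : ℝ → ℝ} {μ x : ℝ}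
    (hφ : ∀ y ∈ uIcc μ x, DifferentiableAt ℝ φ y) (hφ' : ContinuousOn (deriv φ) (uIcc μ x)) :
    φ x - φ μ = (x - μ) * ∫ t in (0 : ℝ)..1, deriv φ (μ + (x - μ) * t) := by
  rw [mul_integral_comp_add_mul, mul_zero, mul_one, add_zero, add_sub_cancel,
    integral_deriv_eq_sub' φ rfl hφ hφ']

lemma div_sq_sub_div_eq_integral {φ : ℝ → ℝ} {s : Set ℝ} (hs : Convex ℝ s) {μ x : ℝ}
    (hμ : μ ∈ s) (hx : x ∈ s) (hxμ : x ≠ μ) (hφ : ∀ y ∈ s, DifferentiableAt ℝ φ y)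
    (hφ' : ContinuousOn (deriv φ) s) :
    (φ x - φ μ) / (x - μ) ^ 2 - deriv φ μ / (x - μ)
      = ∫ t in (0 : ℝ)..1, (deriv φ (μ + (x - μ) * t) - deriv φ μ) / (x - μ) := by
  have hsub : uIcc μ x ⊆ s := hs.ordConnected.uIcc_subset hμ hx
  have hxμ' : x - μ ≠ 0 := sub_ne_zero.2 hxμ
  rw [integral_div, integral_sub (hφ'.intervalIntegrable_comp_add_sub_mul hs hμ hx)
    intervalIntegrable_const, integral_const,
    sub_eq_mul_integral_deriv_comp_add_mul (fun y hy => hφ y (hsub hy)) (hφ'.mono hsub)]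
  field_simp
  ring

lemma ConvexOn.sub_comp_add_mul_div_le {f : ℝ → ℝ} {s : Set ℝ} (hf : ConvexOn ℝ s f)
    {μ x y t : ℝ} (hμ : μ ∈ s) (hx : x ∈ s \ {μ}) (hy : y ∈ s \ {μ}) (hxy : x ≤ y)
    (ht : t ∈ Icc (0 : ℝ) 1) :
    (f (μ + (x - μ) * t) - f μ) / (x - μ) ≤ (f (μ + (y - μ) * t) - f μ) / (y - μ) := by
  rcases ht.1.eq_or_lt with rfl | ht₀
  · simp
  have hslope : ∀ z ∈ s \ {μ}, (f (μ + (z - μ) * t) - f μ) / (z - μ)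
      = t * ((f (μ + (z - μ) * t) - f μ) / (μ + (z - μ) * t - μ)) := fun z hz => by
    have : z - μ ≠ 0 := sub_ne_zero.2 hz.2
    field_simp
    ring
  rw [hslope x hx, hslope y hy]
  refine mul_le_mul_of_nonneg_left (hf.secant_mono hμ (hf.1.add_sub_mul_mem hμ hx.1 ht)
    (hf.1.add_sub_mul_mem hμ hy.1 ht) ?_ ?_ (by gcongr)) ht₀.le
  · simpa using ⟨sub_ne_zero.2 hx.2, ht₀.ne'⟩
  · simpa using ⟨sub_ne_zero.2 hy.2, ht₀.ne'⟩

/-- If `φ'` is convex on `(a,b)` then `h(x) = (φ(x)-φ(μ))/(x-μ)² - φ'(μ)/(x-μ)`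
is monotonically increasing on `(a,b) \ {μ}`. -/
theorem stmt_5 (a b μ : ℝ) (hμ : μ ∈ Ioo a b) (φ : ℝ → ℝ)
    (hdiff : ∀ y ∈ Ioo a b, DifferentiableAt ℝ φ y ∧ DifferentiableAt ℝ (deriv φ) y)
    (hconv : ConvexOn ℝ (Ioo a b) (deriv φ)) :
    MonotoneOn (fun x => (φ x - φ μ) / (x - μ) ^ 2 - deriv φ μ / (x - μ))
      (Ioo a b \ {μ}) := by
  have hφ' : ContinuousOn (deriv φ) (Ioo a b) := fun y hy =>
    (hdiff y hy).2.continuousAt.continuousWithinAt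
  have hint : ∀ x ∈ Ioo a b, IntervalIntegrable
      (fun t => (deriv φ (μ + (x - μ) * t) - deriv φ μ) / (x - μ)) MeasureTheory.volume 0 1 :=
    fun x hx => ((hφ'.intervalIntegrable_comp_add_sub_mul (convex_Ioo a b) hμ hx).sub
      intervalIntegrable_const).div_const _
  intro x hx y hy hxy
  dsimp only
  rw [div_sq_sub_div_eq_integral (convex_Ioo a b) hμ hx.1 hx.2 (fun z hz => (hdiff z hz).1) hφ',
    div_sq_sub_div_eq_integral (convex_Ioo a b) hμ hy.1 hy.2 (fun z hz => (hdiff z hz).1) hφ']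
  exact integral_mono_on zero_le_one (hint x hx.1) (hint y hy.1) fun t ht =>
    hconv.sub_comp_add_mul_div_le hμ hx hy hxy ht
end

section
/- Let φ be twice differentiable on (a,b) with φ' concave on (a,b), and fix μ ∈ (a,b). Then h(x) = (φ(x)-φ(μ))/(x-μ)² - φ'(μ)/(x-μ) is monotonically decreasing in x on (a,b)\{μ}. -/
open Set

/-!
Write `g = φ'` and `u = x - μ`. On each side of `μ`, `h' = -2 F / u³` where
`F(x) = φ(x) - φ(μ) - (g(x) + g(μ)) u / 2` is the trapezoid-rule error (`trapezoidError`);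
`F(μ) = 0` and `F' = (g(x) - g(μ) - g'(x) u) / 2 ≥ 0` because the tangent to the concave `g` at
`x` lies above `g`, so `F` has the sign of `u` and `h' ≤ 0`. Across `μ`,
`h = G / u² + g'(μ) / 2` with `G(x) = φ(x) - φ(μ) - g(μ) u - g'(μ) u² / 2` (`taylorRemainder`),
whose derivative `g(x) - g(μ) - g'(μ) u` is `≤ 0` by the tangent at `μ`; hence `G ≥ 0` left of
`μ` and `G ≤ 0` right of it, which puts `h` above `g'(μ) / 2` on the left and below it on the
right.
-/

lemma monotoneOn_of_hasDerivAt_nonneg {s : Set ℝ} {f f' : ℝ → ℝ} (hs : Convex ℝ s)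
    (hf : ∀ x ∈ s, HasDerivAt f (f' x) x) (hf' : ∀ x ∈ s, 0 ≤ f' x) : MonotoneOn f s :=
  monotoneOn_of_hasDerivWithinAt_nonneg hs (fun x hx ↦ (hf x hx).continuousAt.continuousWithinAt)
    (fun x hx ↦ (hf x (interior_subset hx)).hasDerivWithinAt)
    (fun x hx ↦ hf' x (interior_subset hx))

lemma antitoneOn_of_hasDerivAt_nonpos {s : Set ℝ} {f f' : ℝ → ℝ} (hs : Convex ℝ s)
    (hf : ∀ x ∈ s, HasDerivAt f (f' x) x) (hf' : ∀ x ∈ s, f' x ≤ 0) : AntitoneOn f s :=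
  antitoneOn_of_hasDerivWithinAt_nonpos hs (fun x hx ↦ (hf x hx).continuousAt.continuousWithinAt)
    (fun x hx ↦ (hf x (interior_subset hx)).hasDerivWithinAt)
    (fun x hx ↦ hf' x (interior_subset hx))

lemma ConcaveOn.le_add_mul_sub_of_hasDerivAt {s : Set ℝ} {f : ℝ → ℝ} {x y f' : ℝ}
    (hf : ConcaveOn ℝ s f) (hx : x ∈ s) (hy : y ∈ s) (hf' : HasDerivAt f f' x) :
    f y ≤ f x + f' * (y - x) := by
  rcases lt_trichotomy x y with hxy | rfl | hyx
  · have h := hf.slope_le_of_hasDerivAt hx hy hxy hf'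
    rw [slope_def_field, div_le_iff₀ (sub_pos.2 hxy)] at h
    linarith
  · simp
  · have h := hf.le_slope_of_hasDerivAt hy hx hyx hf'
    rw [slope_def_field, le_div_iff₀ (sub_pos.2 hyx)] at h
    linarith

lemma antitoneOn_diff_singleton_of_sides {α β : Type*} [LinearOrder α] [Preorder β] {f : α → β}
    {s : Set α} {μ : α} (c : β) (hlt : AntitoneOn f (s ∩ Iio μ)) (hgt : AntitoneOn f (s ∩ Ioi μ))
    (hc_lt : ∀ x ∈ s, x < μ → c ≤ f x) (hc_gt : ∀ x ∈ s, μ < x → f x ≤ c) :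
    AntitoneOn f (s \ {μ}) := by
  rintro x ⟨hxs, hxμ⟩ y ⟨hys, hyμ⟩ hxy
  rcases lt_or_gt_of_ne (hxμ : x ≠ μ) with hx | hx
  · rcases lt_or_gt_of_ne (hyμ : y ≠ μ) with hy | hy
    · exact hlt ⟨hxs, hx⟩ ⟨hys, hy⟩ hxy
    · exact (hc_gt y hys hy).trans (hc_lt x hxs hx)
  · exact hgt ⟨hxs, hx⟩ ⟨hys, hx.trans_le hxy⟩ hxy

section TaylorQuotient

variable (φ g : ℝ → ℝ) (μ : ℝ)

noncomputable def taylorQuotient (x : ℝ) : ℝ :=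
  (φ x - φ μ) / (x - μ) ^ 2 - g μ / (x - μ)

noncomputable def trapezoidError (x : ℝ) : ℝ :=
  φ x - φ μ - (g x + g μ) * (x - μ) / 2

noncomputable def taylorRemainder (c x : ℝ) : ℝ :=
  φ x - φ μ - g μ * (x - μ) - c * (x - μ) ^ 2 / 2

variable {φ g μ} {g' : ℝ → ℝ} {x : ℝ} {s t : Set ℝ}

lemma taylorQuotient_eq (c : ℝ) (hx : x ≠ μ) :
    taylorQuotient φ g μ x = taylorRemainder φ g μ c x / (x - μ) ^ 2 + c / 2 := by
  have hxμ : x - μ ≠ 0 := sub_ne_zero.2 hx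
  unfold taylorQuotient taylorRemainder
  field_simp
  ring

lemma hasDerivAt_trapezoidError (hφ : HasDerivAt φ (g x) x) (hg : HasDerivAt g (g' x) x) :
    HasDerivAt (trapezoidError φ g μ) ((g x - g μ - g' x * (x - μ)) / 2) x := by
  have h := (hφ.sub_const (φ μ)).sub
    (((hg.add_const (g μ)).fun_mul ((hasDerivAt_id' x).sub_const μ)).div_const 2)
  exact h.congr_deriv (by ring)

lemma hasDerivAt_taylorRemainder {c : ℝ} (hφ : HasDerivAt φ (g x) x) :
    HasDerivAt (taylorRemainder φ g μ c) (g x - g μ - c * (x - μ)) x := by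
  have hu := (hasDerivAt_id' x).sub_const μ
  have h := ((hφ.sub_const (φ μ)).sub (hu.const_mul (g μ))).sub
    (((hu.fun_pow 2).const_mul c).div_const 2)
  exact h.congr_deriv (by ring)

lemma hasDerivAt_taylorQuotient (hx : x ≠ μ) (hφ : HasDerivAt φ (g x) x) :
    HasDerivAt (taylorQuotient φ g μ) (-2 * trapezoidError φ g μ x / (x - μ) ^ 3) x := by
  have hxμ : x - μ ≠ 0 := sub_ne_zero.2 hx
  have hu := (hasDerivAt_id' x).sub_const μ
  have h := ((hφ.sub_const (φ μ)).fun_div (hu.fun_pow 2) (pow_ne_zero 2 hxμ)).sub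
    ((hasDerivAt_const x (g μ)).fun_div hu hxμ)
  refine h.congr_deriv ?_
  unfold trapezoidError
  field_simp
  ring

variable (hs : Convex ℝ s) (hμ : μ ∈ s) (hφ : ∀ x ∈ s, HasDerivAt φ (g x) x)
  (hg : ConcaveOn ℝ s g)
include hs hμ hφ hg

lemma monotoneOn_trapezoidError (hg' : ∀ x ∈ s, HasDerivAt g (g' x) x) :
    MonotoneOn (trapezoidError φ g μ) s := by
  refine monotoneOn_of_hasDerivAt_nonneg hs
    (fun x hx ↦ hasDerivAt_trapezoidError (hφ x hx) (hg' x hx)) fun x hx ↦ ?_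
  have := hg.le_add_mul_sub_of_hasDerivAt hx hμ (hg' x hx)
  linarith

lemma antitoneOn_taylorRemainder {c : ℝ} (hgμ : HasDerivAt g c μ) :
    AntitoneOn (taylorRemainder φ g μ c) s := by
  refine antitoneOn_of_hasDerivAt_nonpos hs (fun x hx ↦ hasDerivAt_taylorRemainder (hφ x hx))
    fun x hx ↦ ?_
  have := hg.le_add_mul_sub_of_hasDerivAt hμ hx hgμ
  linarith

lemma antitoneOn_taylorQuotient_of_notMem (hg' : ∀ x ∈ s, HasDerivAt g (g' x) x)
    (ht : Convex ℝ t) (hts : t ⊆ s) (hμt : μ ∉ t) :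
    AntitoneOn (taylorQuotient φ g μ) t := by
  have hne : ∀ x ∈ t, x ≠ μ := fun x hx h ↦ hμt (h ▸ hx)
  refine antitoneOn_of_hasDerivAt_nonpos ht
    (fun x hx ↦ hasDerivAt_taylorQuotient (hne x hx) (hφ x (hts hx))) fun x hx ↦ ?_
  have hF := monotoneOn_trapezoidError hs hμ hφ hg hg'
  have hsign : 0 ≤ trapezoidError φ g μ x * (x - μ) := by
    have hFμ : trapezoidError φ g μ μ = 0 := by simp [trapezoidError]
    rcases lt_or_gt_of_ne (hne x hx) with hlt | hlt
    · exact mul_nonneg_of_nonpos_of_nonpos (hFμ ▸ hF (hts hx) hμ hlt.le) (by linarith)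
    · exact mul_nonneg (hFμ ▸ hF hμ (hts hx) hlt.le) (by linarith)
  have hxμ : x - μ ≠ 0 := sub_ne_zero.2 (hne x hx)
  calc -2 * trapezoidError φ g μ x / (x - μ) ^ 3
      = -2 * (trapezoidError φ g μ x * (x - μ)) / (x - μ) ^ 4 := by field_simp
    _ ≤ 0 := div_nonpos_of_nonpos_of_nonneg (by linarith) (by positivity)

lemma antitoneOn_taylorQuotient (hg' : ∀ x ∈ s, HasDerivAt g (g' x) x) :
    AntitoneOn (taylorQuotient φ g μ) (s \ {μ}) := by
  have hR := antitoneOn_taylorRemainder hs hμ hφ hg (hg' μ hμ)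
  have hR0 : taylorRemainder φ g μ (g' μ) μ = 0 := by simp [taylorRemainder]
  refine antitoneOn_diff_singleton_of_sides (g' μ / 2)
    (antitoneOn_taylorQuotient_of_notMem hs hμ hφ hg hg' (hs.inter (convex_Iio μ))
      inter_subset_left fun h ↦ lt_irrefl μ h.2)
    (antitoneOn_taylorQuotient_of_notMem hs hμ hφ hg hg' (hs.inter (convex_Ioi μ))
      inter_subset_left fun h ↦ lt_irrefl μ h.2) (fun x hx hlt ↦ ?_) fun x hx hlt ↦ ?_
  · rw [taylorQuotient_eq (g' μ) hlt.ne]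
    have := div_nonneg (hR0 ▸ hR hx hμ hlt.le) (sq_nonneg (x - μ))
    linarith
  · rw [taylorQuotient_eq (g' μ) hlt.ne']
    have := div_nonpos_of_nonpos_of_nonneg (hR0 ▸ hR hμ hx hlt.le) (sq_nonneg (x - μ))
    linarith

end TaylorQuotient

/-- If `φ'` is concave on `(a,b)` then `h(x) = (φ(x)-φ(μ))/(x-μ)² - φ'(μ)/(x-μ)`
is monotonically decreasing on `(a,b) \ {μ}`. -/
theorem stmt_6 (a b μ : ℝ) (hμ : μ ∈ Ioo a b) (φ : ℝ → ℝ)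
    (hdiff : ∀ y ∈ Ioo a b, DifferentiableAt ℝ φ y ∧ DifferentiableAt ℝ (deriv φ) y)
    (hconv : ConcaveOn ℝ (Ioo a b) (deriv φ)) :
    AntitoneOn (fun x => (φ x - φ μ) / (x - μ) ^ 2 - deriv φ μ / (x - μ))
      (Ioo a b \ {μ}) :=
  antitoneOn_taylorQuotient (convex_Ioo a b) hμ (fun x hx ↦ (hdiff x hx).1.hasDerivAt) hconv
    fun x hx ↦ (hdiff x hx).2.hasDerivAt
end

section
/- Let X be an exponential random variable with rate 1 (mean 1). Then E[e^{X/2}] - e^{1/2} ≥ (1 - e^{1/2} + (1/2)e^{1/2}), i.e., the Jensen gap for φ(x) = e^{x/2} is at least h(0;1)·Var(X) where h(0;1) = 1 - e^{1/2} + (1/2)e^{1/2} ≈ 0.176 and Var(X) = 1. -/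
open MeasureTheory ProbabilityTheory Real Set

/-! For `X ~ Exp(1)` the moment generating function is `E[e^{tX}] = 1/(1-t)`, so
`E[e^{X/2}] = 2` and the claimed bound `2 - e^{1/2} ≥ 1 - e^{1/2}/2` reduces to `e^{1/2} ≤ 2`,
which is the elementary estimate `e^x ≤ 1/(1-x)` on `[0, 1)`. -/

lemma integral_expMeasure_eq_setIntegral {r : ℝ} (hr : 0 < r) (g : ℝ → ℝ) :
    ∫ x, g x ∂expMeasure r = ∫ x in Ioi 0, r * exp (-(r * x)) * g x := by
  have hdensity : expMeasure r = volume.withDensity (exponentialPDF r) := rfl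
  rw [hdensity, integral_withDensity_eq_integral_toReal_smul (f := exponentialPDF r)
    (measurable_exponentialPDFReal r).ennreal_ofReal
    (ae_of_all _ fun _ => ENNReal.ofReal_lt_top)]
  have hintegrand : (fun x => (exponentialPDF r x).toReal • g x)
      = (Ici 0).indicator fun x => r * exp (-(r * x)) * g x := by
    ext x
    rw [exponentialPDF, ENNReal.toReal_ofReal (exponentialPDFReal_nonneg hr x), smul_eq_mul]
    by_cases hx : 0 ≤ x <;> simp [hx, exponentialPDFReal, gammaPDFReal]
  rw [hintegrand, integral_indicator measurableSet_Ici, integral_Ici_eq_integral_Ioi]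

lemma integral_exp_mul_expMeasure {r t : ℝ} (hr : 0 < r) (ht : t < r) :
    ∫ x, exp (t * x) ∂expMeasure r = r / (r - t) := by
  have hintegrand : ∀ x, r * exp (-(r * x)) * exp (t * x) = r * exp ((t - r) * x) := by
    intro x
    rw [mul_assoc, ← exp_add]
    ring_nf
  simp_rw [integral_expMeasure_eq_setIntegral hr, hintegrand, integral_const_mul,
    integral_exp_mul_Ioi (sub_neg.mpr ht), mul_zero, exp_zero, neg_div, ← div_neg, neg_sub,
    mul_one_div]

/-- For `X ~ Exp(1)`, the Jensen gap `E[e^{X/2}] - e^{1/2}` is at least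
`h(0;1)·Var(X) = 1 - e^{1/2} + (1/2)e^{1/2}`. -/
theorem stmt_8 :
    (∫ x, Real.exp (x / 2) ∂(expMeasure 1)) - Real.exp (1 / 2) ≥
      1 - Real.exp (1 / 2) + (1 / 2) * Real.exp (1 / 2) := by
  have hmean : ∫ x, exp (x / 2) ∂expMeasure 1 = 2 := by
    simp_rw [div_eq_inv_mul, integral_exp_mul_expMeasure one_pos (by norm_num : (2 : ℝ)⁻¹ < 1)]
    norm_num
  have hbound : exp (1 / 2) ≤ 2 := by
    calc exp (1 / 2) ≤ 1 / (1 - 1 / 2) :=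
          exp_bound_div_one_sub_of_interval (by norm_num) (by norm_num)
      _ = 2 := by norm_num
  rw [hmean]
  linarith
end

section
/- Let X be a nonnegative random variable with mean μ > 0, finite variance, and t > 0 such that E[e^{tX}] < ∞. Then E[e^{tX}] - e^{tμ} ≥ ((1 - e^{tμ} + tμe^{tμ})/μ²) · Var(X), and the constant (1 - e^{tμ} + tμe^{tμ})/μ² is strictly positive. -/
/-!
Write `m = tμ` and `v = t(x - μ)`. Then `e^{tx} - e^{tμ} - te^{tμ}(x - μ) = e^m (e^v - 1 - v)`, and
`(e^v - 1 - v)/v² = ∫₀¹ (1 - s) e^{sv} ds` is increasing in `v`. For `x ≥ 0` we have `v ≥ -m`, the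
value at `x = 0`, which yields the pointwise bound `c (x - μ)² ≤ e^{tx} - e^{tμ} - te^{tμ}(x - μ)`
with the constant `c` of the theorem. Taking expectations removes the linear term since `E[X] = μ`.
-/

open MeasureTheory Real

noncomputable def expRemainderCoeff (v : ℝ) : ℝ :=
  ∫ s in (0 : ℝ)..1, (1 - s) * exp (s * v)

lemma exp_sub_one_sub_eq_sq_mul_expRemainderCoeff (v : ℝ) :
    exp v - 1 - v = v ^ 2 * expRemainderCoeff v := by
  have hderiv : ∀ s ∈ Set.uIcc (0 : ℝ) 1,
      HasDerivAt (fun s => (1 - s) * v * exp (s * v) + exp (s * v))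
        (v ^ 2 * ((1 - s) * exp (s * v))) s := by
    intro s _
    have hexp : HasDerivAt (fun s => exp (s * v)) (exp (s * v) * v) s :=
      ((hasDerivAt_id s).mul_const v).exp.congr_deriv (by simp)
    have hlin : HasDerivAt (fun s => (1 - s) * v) (-v) s := by
      simpa using ((hasDerivAt_id s).const_sub 1).mul_const v
    exact ((hlin.mul hexp).add hexp).congr_deriv (by ring)
  have hint : IntervalIntegrable (fun s => v ^ 2 * ((1 - s) * exp (s * v))) volume 0 1 :=
    (by fun_prop : Continuous fun s => v ^ 2 * ((1 - s) * exp (s * v))).intervalIntegrable _ _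
  rw [expRemainderCoeff, ← intervalIntegral.integral_const_mul,
    intervalIntegral.integral_eq_sub_of_hasDerivAt hderiv hint]
  simp only [sub_self, zero_mul, one_mul, mul_one, zero_add, exp_zero]
  ring

lemma expRemainderCoeff_mono : Monotone expRemainderCoeff := by
  intro v w hvw
  refine intervalIntegral.integral_mono_on zero_le_one
    ((by fun_prop : Continuous fun s => (1 - s) * exp (s * v)).intervalIntegrable _ _)
    ((by fun_prop : Continuous fun s => (1 - s) * exp (s * w)).intervalIntegrable _ _) ?_
  intro s hs
  gcongr
  · linarith [hs.2]
  · exact hs.1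

lemma one_sub_exp_add_mul_exp_pos {m : ℝ} (hm : m ≠ 0) : 0 < 1 - exp m + m * exp m := by
  have hlt := add_one_lt_exp (neg_ne_zero.2 hm)
  have hfactor : 1 - exp m + m * exp m = exp m * (exp (-m) - (-m + 1)) := by
    rw [mul_sub, ← exp_add, add_neg_cancel, exp_zero]; ring
  rw [hfactor]
  exact mul_pos (exp_pos m) (by linarith)

lemma div_sq_mul_sq_le_exp_sub_exp_sub {μ t x : ℝ} (hμ : μ ≠ 0) (ht : 0 ≤ t) (hx : 0 ≤ x) :
    (1 - exp (t * μ) + t * μ * exp (t * μ)) / μ ^ 2 * (x - μ) ^ 2 ≤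
      exp (t * x) - exp (t * μ) - t * exp (t * μ) * (x - μ) := by
  have hcoeff : expRemainderCoeff (-(t * μ)) ≤ expRemainderCoeff (t * (x - μ)) :=
    expRemainderCoeff_mono (by nlinarith)
  have hlhs : (1 - exp (t * μ) + t * μ * exp (t * μ)) / μ ^ 2 * (x - μ) ^ 2 =
      exp (t * μ) * (t * (x - μ)) ^ 2 * expRemainderCoeff (-(t * μ)) := by
    have h := exp_sub_one_sub_eq_sq_mul_expRemainderCoeff (-(t * μ))
    have hexp : exp (t * μ) * exp (-(t * μ)) = 1 := by rw [← exp_add]; simp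
    rw [div_mul_eq_mul_div, div_eq_iff (pow_ne_zero 2 hμ)]
    linear_combination (exp (t * μ) * (x - μ) ^ 2) * h - (x - μ) ^ 2 * hexp
  have hrhs : exp (t * x) - exp (t * μ) - t * exp (t * μ) * (x - μ) =
      exp (t * μ) * (t * (x - μ)) ^ 2 * expRemainderCoeff (t * (x - μ)) := by
    have h := exp_sub_one_sub_eq_sq_mul_expRemainderCoeff (t * (x - μ))
    have hexp : exp (t * μ) * exp (t * (x - μ)) = exp (t * x) := by rw [← exp_add]; ring_nf
    linear_combination exp (t * μ) * h - hexp
  rw [hlhs, hrhs]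
  gcongr

lemma mul_integral_sq_sub_le_integral_comp_sub {Ω : Type*} [MeasurableSpace Ω] {P : Measure Ω}
    [IsProbabilityMeasure P] {X : Ω → ℝ} {f : ℝ → ℝ} {μ c d : ℝ} (hc : 0 ≤ c)
    (hX : Integrable X P) (hmean : ∫ ω, X ω ∂P = μ) (hf : Integrable (fun ω => f (X ω)) P)
    (hle : ∀ᵐ ω ∂P, c * (X ω - μ) ^ 2 ≤ f (X ω) - f μ - d * (X ω - μ)) :
    c * ∫ ω, (X ω - μ) ^ 2 ∂P ≤ (∫ ω, f (X ω) ∂P) - f μ := by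
  have hXμ : Integrable (fun ω => X ω - μ) P := hX.sub (integrable_const μ)
  have hfμ : Integrable (fun ω => f (X ω) - f μ) P := hf.sub (integrable_const _)
  calc c * ∫ ω, (X ω - μ) ^ 2 ∂P = ∫ ω, c * (X ω - μ) ^ 2 ∂P := (integral_const_mul _ _).symm
    _ ≤ ∫ ω, f (X ω) - f μ - d * (X ω - μ) ∂P :=
      integral_mono_of_nonneg (ae_of_all _ fun ω => by positivity) (hfμ.sub (hXμ.const_mul d)) hle
    _ = (∫ ω, f (X ω) ∂P) - f μ := by
      rw [integral_sub hfμ (hXμ.const_mul d), integral_sub hf (integrable_const _),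
        integral_const_mul, integral_sub hX (integrable_const _)]
      simp [hmean]

theorem stmt_9_general {Ω : Type*} [MeasureSpace Ω] [IsProbabilityMeasure (volume : Measure Ω)]
    (X : Ω → ℝ) (μ t : ℝ) (hμ : 0 < μ) (ht : 0 < t)
    (hX : ∀ᵐ ω, 0 ≤ X ω)
    (hXint : Integrable X) (hmean : ∫ ω, X ω = μ)
    (hmgf : Integrable (fun ω => Real.exp (t * X ω))) :
    (∫ ω, Real.exp (t * X ω)) - Real.exp (t * μ) ≥
        (1 - Real.exp (t * μ) + t * μ * Real.exp (t * μ)) / μ ^ 2 *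
          ∫ ω, (X ω - μ) ^ 2 ∧
      0 < (1 - Real.exp (t * μ) + t * μ * Real.exp (t * μ)) / μ ^ 2 := by
  have hc : 0 < (1 - exp (t * μ) + t * μ * exp (t * μ)) / μ ^ 2 :=
    div_pos (one_sub_exp_add_mul_exp_pos (by positivity)) (by positivity)
  refine ⟨?_, hc⟩
  refine mul_integral_sq_sub_le_integral_comp_sub (f := fun x => exp (t * x))
    (d := t * exp (t * μ)) hc.le hXint hmean hmgf ?_
  filter_upwards [hX] with ω hω
  exact div_sq_mul_sq_le_exp_sub_exp_sub hμ.ne' ht.le hω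

/-- For a nonnegative random variable `X` with mean `μ > 0` and `t > 0`,
`E[e^{tX}] - e^{tμ} ≥ ((1 - e^{tμ} + tμe^{tμ})/μ²)·Var(X)`, and this constant
is strictly positive. -/
theorem stmt_9 {Ω : Type*} [MeasureSpace Ω] [IsProbabilityMeasure (volume : Measure Ω)]
    (X : Ω → ℝ) (μ t : ℝ) (hμ : 0 < μ) (ht : 0 < t)
    (hX : ∀ᵐ ω, 0 ≤ X ω)
    (hXint : Integrable X) (hmean : ∫ ω, X ω = μ)
    (hX2 : Integrable (fun ω => (X ω) ^ 2))
    (hmgf : Integrable (fun ω => Real.exp (t * X ω))) :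
    (∫ ω, Real.exp (t * X ω)) - Real.exp (t * μ) ≥
        (1 - Real.exp (t * μ) + t * μ * Real.exp (t * μ)) / μ ^ 2 *
          ∫ ω, (X ω - μ) ^ 2 ∧
      0 < (1 - Real.exp (t * μ) + t * μ * Real.exp (t * μ)) / μ ^ 2 :=
  stmt_9_general X μ t hμ ht hX hXint hmean hmgf
end

section
/- For t > 0 and μ ∈ ℝ, the function h(x) = (e^{tx} - e^{tμ})/(x-μ)² - te^{tμ}/(x-μ) satisfies lim_{x→-∞} h(x) = 0 and lim_{x→+∞} h(x) = +∞, and h is monotonically increasing on ℝ\{μ}. -/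
/-!
Substituting `u = t (x - μ)` gives `h(x) = t² e^{tμ} g(u)` with `g(u) = (e^u - 1 - u) / u²`, so
everything reduces to `g`. Its limits at `±∞` are immediate. On each half-line `g` increases
because `g'(u) = φ(u) / u³` with `φ(u) = (u - 2) e^u + u + 2`, and `φ` is increasing with
`φ(0) = 0`. Across `0` the function jumps over `1/2`, since `e^u` lies below `1 + u + u²/2`
for `u ≤ 0` and above it for `u ≥ 0`.
-/

open Filter Set Real

/-- The divided difference `exp[0, 0, u]`; at `u = 0` it takes the junk value `0`, not `1/2`. -/
noncomputable def expSecondDivDiff (u : ℝ) : ℝ := (exp u - 1 - u) / u ^ 2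

lemma one_sub_mul_exp_le_one (u : ℝ) : (1 - u) * exp u ≤ 1 := by
  have h := mul_le_mul_of_nonneg_right (by linarith [add_one_le_exp (-u)] : 1 - u ≤ exp (-u))
    (exp_pos u).le
  rwa [← exp_add, neg_add_cancel, exp_zero] at h

lemma monotone_sub_two_mul_exp_add_add_two :
    Monotone fun u : ℝ => (u - 2) * exp u + u + 2 := by
  refine monotone_of_hasDerivAt_nonneg (f' := fun u => 1 - (1 - u) * exp u) (fun u => ?_)
    (fun u => sub_nonneg.2 (one_sub_mul_exp_le_one u))
  exact ((((hasDerivAt_id' u).sub_const 2).mul (hasDerivAt_exp u)).add (hasDerivAt_id' u)).add_const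
    2 |>.congr_deriv (by ring)

lemma sub_two_mul_exp_add_add_two_div_pow_three_nonneg (u : ℝ) :
    0 ≤ ((u - 2) * exp u + u + 2) / u ^ 3 := by
  have hmono := @monotone_sub_two_mul_exp_add_add_two
  rcases le_total 0 u with hu | hu
  · exact div_nonneg (by simpa using hmono hu) (pow_nonneg hu 3)
  · exact div_nonneg_of_nonpos (by simpa using hmono hu) (Odd.pow_nonpos ⟨1, rfl⟩ hu)

lemma exp_le_quadratic_of_nonpos {u : ℝ} (hu : u ≤ 0) : exp u ≤ 1 + u + u ^ 2 / 2 := by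
  have hanti : Antitone fun v : ℝ => 1 + v + v ^ 2 / 2 - exp v := by
    refine antitone_of_hasDerivAt_nonpos (f' := fun v => 1 + v - exp v) (fun v => ?_)
      (fun v => show 1 + v - exp v ≤ 0 by linarith [add_one_le_exp v])
    exact ((((hasDerivAt_id' v).const_add 1).add ((hasDerivAt_pow 2 v).div_const 2)).sub
      (hasDerivAt_exp v)).congr_deriv (by ring)
  simpa using hanti hu

namespace expSecondDivDiff

lemma hasDerivAt {u : ℝ} (hu : u ≠ 0) :
    HasDerivAt expSecondDivDiff (((u - 2) * exp u + u + 2) / u ^ 3) u :=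
  ((((hasDerivAt_exp u).sub_const 1).sub (hasDerivAt_id' u)).div (hasDerivAt_pow 2 u)
    (pow_ne_zero 2 hu)).congr_deriv (by simp only [Pi.sub_apply]; field_simp; ring)

lemma monotoneOn_of_convex {D : Set ℝ} (hD : Convex ℝ D) (h0 : (0 : ℝ) ∉ D) :
    MonotoneOn expSecondDivDiff D :=
  monotoneOn_of_hasDerivWithinAt_nonneg hD
    (fun _ hu => (hasDerivAt (ne_of_mem_of_not_mem hu h0)).continuousAt.continuousWithinAt)
    (fun _ hu => (hasDerivAt (ne_of_mem_of_not_mem (interior_subset hu) h0)).hasDerivWithinAt)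
    (fun u _ => sub_two_mul_exp_add_add_two_div_pow_three_nonneg u)

lemma le_half_of_neg {u : ℝ} (hu : u < 0) : expSecondDivDiff u ≤ 1 / 2 := by
  rw [expSecondDivDiff, div_le_iff₀ (sq_pos_of_neg hu)]
  linarith [exp_le_quadratic_of_nonpos hu.le]

lemma half_le_of_pos {u : ℝ} (hu : 0 < u) : 1 / 2 ≤ expSecondDivDiff u := by
  rw [expSecondDivDiff, le_div_iff₀ (by positivity)]
  linarith [quadratic_le_exp_of_nonneg hu.le]

lemma monotoneOn_compl_zero : MonotoneOn expSecondDivDiff {0}ᶜ := by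
  intro a ha b hb hab
  rcases lt_or_gt_of_ne ha with ha | ha
  · rcases lt_or_gt_of_ne hb with hb | hb
    · exact monotoneOn_of_convex (convex_Iio 0) (by simp) ha hb hab
    · exact (le_half_of_neg ha).trans (half_le_of_pos hb)
  · exact monotoneOn_of_convex (convex_Ioi 0) (by simp) ha (ha.trans_le hab) hab

lemma eq_inv {u : ℝ} (hu : u ≠ 0) :
    expSecondDivDiff u = (exp u - 1) * u⁻¹ * u⁻¹ - u⁻¹ := by
  rw [expSecondDivDiff]
  field_simp

lemma tendsto_atBot : Tendsto expSecondDivDiff atBot (nhds 0) := by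
  have h := (((tendsto_exp_atBot.sub_const 1).mul tendsto_inv_atBot_zero).mul
    tendsto_inv_atBot_zero).sub tendsto_inv_atBot_zero
  simp only [mul_zero, sub_zero] at h
  refine h.congr' ?_
  filter_upwards [eventually_lt_atBot 0] with u hu
  exact (eq_inv hu.ne).symm

lemma tendsto_atTop : Tendsto expSecondDivDiff atTop atTop := by
  have h := (tendsto_exp_div_pow_atTop 2).atTop_add
    (((tendsto_inv_atTop_zero.mul tendsto_inv_atTop_zero).neg).sub tendsto_inv_atTop_zero)
  refine h.congr' ?_
  filter_upwards [eventually_gt_atTop 0] with u hu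
  rw [eq_inv hu.ne']
  field_simp
  ring

end expSecondDivDiff

lemma sub_div_sq_sub_div_eq_expSecondDivDiff (t μ x : ℝ) :
    (exp (t * x) - exp (t * μ)) / (x - μ) ^ 2 - t * exp (t * μ) / (x - μ) =
      t ^ 2 * exp (t * μ) * expSecondDivDiff (t * (x - μ)) := by
  rcases eq_or_ne t 0 with rfl | ht
  · simp
  rcases eq_or_ne x μ with rfl | hx
  · simp [expSecondDivDiff]
  have hxμ : x - μ ≠ 0 := sub_ne_zero.2 hx
  rw [expSecondDivDiff, mul_sub, exp_sub]
  field_simp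

/-- For `t > 0`, `h(x) = (e^{tx}-e^{tμ})/(x-μ)² - te^{tμ}/(x-μ)` tends to `0` at `-∞`,
to `+∞` at `+∞`, and is monotonically increasing on `ℝ \ {μ}`. -/
theorem stmt_10 (t μ : ℝ) (ht : 0 < t) :
    Tendsto (fun x : ℝ =>
        (Real.exp (t * x) - Real.exp (t * μ)) / (x - μ) ^ 2 -
          t * Real.exp (t * μ) / (x - μ)) atBot (nhds 0) ∧
      Tendsto (fun x : ℝ =>
        (Real.exp (t * x) - Real.exp (t * μ)) / (x - μ) ^ 2 -
          t * Real.exp (t * μ) / (x - μ)) atTop atTop ∧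
      MonotoneOn (fun x : ℝ =>
        (Real.exp (t * x) - Real.exp (t * μ)) / (x - μ) ^ 2 -
          t * Real.exp (t * μ) / (x - μ)) ({μ}ᶜ) := by
  simp only [sub_div_sq_sub_div_eq_expSecondDivDiff]
  have hC : 0 < t ^ 2 * exp (t * μ) := by positivity
  have hbot : Tendsto (fun x : ℝ => x - μ) atBot atBot :=
    tendsto_atBot_add_const_right _ (-μ) tendsto_id
  have htop : Tendsto (fun x : ℝ => x - μ) atTop atTop :=
    tendsto_atTop_add_const_right _ (-μ) tendsto_id
  refine ⟨?_, ?_, ?_⟩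
  · simpa using (expSecondDivDiff.tendsto_atBot.comp (hbot.const_mul_atBot ht)).const_mul
      (t ^ 2 * exp (t * μ))
  · exact (expSecondDivDiff.tendsto_atTop.comp (htop.const_mul_atTop ht)).const_mul_atTop hC
  · refine (monotone_mul_left_of_nonneg hC.le).comp_monotoneOn
      (expSecondDivDiff.monotoneOn_compl_zero.comp ?_ ?_)
    · exact fun x _ y _ hxy => mul_le_mul_of_nonneg_left (by linarith) ht.le
    · exact fun x hx => mul_ne_zero ht.ne' (sub_ne_zero.2 hx)
end

section
/- Let x₁,…,xₙ be positive reals with arithmetic mean x̄ and geometric mean Ḡ = (x₁⋯xₙ)^{1/n}, a = min xᵢ, b = max xᵢ, S² = (1/n)∑(xᵢ-x̄)². Define h(x;x̄) = (-log x + log x̄)/(x-x̄)² + 1/(x̄(x-x̄)). Then exp(S² h(b;x̄)) ≤ x̄/Ḡ ≤ exp(S² h(a;x̄)), where h(x̄;x̄) is interpreted as the limit 1/(2x̄²). -/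
/-!
With `R(x) = log x̄ - log x + (x - x̄) / x̄`, the deviations `xᵢ - x̄` sum to zero, so
`log (x̄ / Ḡ)` is the mean of the `R(xᵢ)`, and `R(x) = (x - x̄)² h(x; x̄)`. Moreover
`h(x; x̄) = ψ(x / x̄) / x̄²` with `ψ(t) = (t - 1 - log t) / (t - 1)²`, which decreases on `(0, ∞)`:
`ψ'` has the sign of `-(t - 1)(t - 1/t - 2 log t)`, and `t - 1/t - 2 log t` increases and vanishes
at `1`. Hence `h(b; x̄) ≤ h(xᵢ; x̄) ≤ h(a; x̄)`, and averaging against `(xᵢ - x̄)²` gives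
`S² h(b; x̄) ≤ log (x̄ / Ḡ) ≤ S² h(a; x̄)`.
-/

open Finset Set Real

lemma monotoneOn_of_hasDerivAt_nonneg_of_isOpen {D : Set ℝ} (hD : Convex ℝ D) (hDo : IsOpen D)
    {f f' : ℝ → ℝ} (hf : ∀ x ∈ D, HasDerivAt f (f' x) x) (hf' : ∀ x ∈ D, 0 ≤ f' x) :
    MonotoneOn f D :=
  monotoneOn_of_hasDerivWithinAt_nonneg hD
    (fun x hx ↦ (hf x hx).continuousAt.continuousWithinAt)
    (by simpa only [hDo.interior_eq] using fun x hx ↦ (hf x hx).hasDerivWithinAt)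
    (by simpa only [hDo.interior_eq] using hf')

lemma antitoneOn_of_hasDerivAt_nonpos_of_isOpen {D : Set ℝ} (hD : Convex ℝ D) (hDo : IsOpen D)
    {f f' : ℝ → ℝ} (hf : ∀ x ∈ D, HasDerivAt f (f' x) x) (hf' : ∀ x ∈ D, f' x ≤ 0) :
    AntitoneOn f D :=
  antitoneOn_of_hasDerivWithinAt_nonpos hD
    (fun x hx ↦ (hf x hx).continuousAt.continuousWithinAt)
    (by simpa only [hDo.interior_eq] using fun x hx ↦ (hf x hx).hasDerivWithinAt)
    (by simpa only [hDo.interior_eq] using hf')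

lemma sub_one_mul_nonneg_of_monotoneOn {f : ℝ → ℝ} (hf : MonotoneOn f (Ioi 0)) (h1 : f 1 = 0)
    {t : ℝ} (ht : 0 < t) : 0 ≤ (t - 1) * f t := by
  rcases le_total t 1 with h | h
  · exact mul_nonneg_of_nonpos_of_nonpos (by linarith) (h1 ▸ hf ht (mem_Ioi.2 one_pos) h)
  · exact mul_nonneg (by linarith) (h1 ▸ hf (mem_Ioi.2 one_pos) ht h)

lemma monotoneOn_log_sub_add_sq :
    MonotoneOn (fun t ↦ log t - (t - 1) + (t - 1) ^ 2 / 2) (Ioi 0) := by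
  refine monotoneOn_of_hasDerivAt_nonneg_of_isOpen (convex_Ioi 0) isOpen_Ioi
    (f' := fun t ↦ (t - 1) ^ 2 / t) (fun t (ht : 0 < t) ↦ ?_) (fun t (ht : 0 < t) ↦ by positivity)
  have := ((hasDerivAt_log ht.ne').sub ((hasDerivAt_id t).sub_const 1)).add
    ((((hasDerivAt_id t).sub_const 1).pow 2).div_const 2)
  refine this.congr_deriv ?_
  simp only [id_eq]
  field_simp
  ring

lemma monotoneOn_sub_inv_sub_two_mul_log :
    MonotoneOn (fun t ↦ t - t⁻¹ - 2 * log t) (Ioi 0) := by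
  refine monotoneOn_of_hasDerivAt_nonneg_of_isOpen (convex_Ioi 0) isOpen_Ioi
    (f' := fun t ↦ ((t - 1) / t) ^ 2) (fun t (ht : 0 < t) ↦ ?_) (fun t _ ↦ by positivity)
  have := ((hasDerivAt_id t).sub (hasDerivAt_inv ht.ne')).sub
    ((hasDerivAt_log ht.ne').const_mul 2)
  refine this.congr_deriv ?_
  field_simp
  ring

noncomputable def logRemainderRatio (t : ℝ) : ℝ := (t - 1 - log t) / (t - 1) ^ 2

lemma hasDerivAt_logRemainderRatio {t : ℝ} (ht : 0 < t) (ht1 : t ≠ 1) :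
    HasDerivAt logRemainderRatio (-((t - 1) * (t - t⁻¹ - 2 * log t)) / ((t - 1) ^ 2) ^ 2) t := by
  have := (((hasDerivAt_id t).sub_const 1).sub (hasDerivAt_log ht.ne')).div
    (((hasDerivAt_id t).sub_const 1).pow 2) (pow_ne_zero 2 (sub_ne_zero.mpr ht1))
  refine this.congr_deriv ?_
  simp only [id_eq, Pi.pow_apply, Pi.sub_apply]
  field_simp
  ring

lemma logRemainderRatio_deriv_nonpos {t : ℝ} (ht : 0 < t) :
    -((t - 1) * (t - t⁻¹ - 2 * log t)) / ((t - 1) ^ 2) ^ 2 ≤ 0 :=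
  div_nonpos_of_nonpos_of_nonneg
    (neg_nonpos.mpr (sub_one_mul_nonneg_of_monotoneOn monotoneOn_sub_inv_sub_two_mul_log
      (by simp) ht)) (by positivity)

lemma antitoneOn_logRemainderRatio_Ioo : AntitoneOn logRemainderRatio (Ioo 0 1) :=
  antitoneOn_of_hasDerivAt_nonpos_of_isOpen (convex_Ioo 0 1) isOpen_Ioo
    (fun _ ht ↦ hasDerivAt_logRemainderRatio ht.1 ht.2.ne)
    (fun _ ht ↦ logRemainderRatio_deriv_nonpos ht.1)

lemma antitoneOn_logRemainderRatio_Ioi : AntitoneOn logRemainderRatio (Ioi 1) :=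
  antitoneOn_of_hasDerivAt_nonpos_of_isOpen (convex_Ioi 1) isOpen_Ioi
    (fun _ (ht : 1 < _) ↦ hasDerivAt_logRemainderRatio (one_pos.trans ht) ht.ne')
    (fun _ (ht : 1 < _) ↦ logRemainderRatio_deriv_nonpos (one_pos.trans ht))

lemma half_le_logRemainderRatio {t : ℝ} (ht0 : 0 < t) (ht1 : t < 1) :
    1 / 2 ≤ logRemainderRatio t := by
  have hk : log t - (t - 1) + (t - 1) ^ 2 / 2 ≤ 0 := by
    simpa using monotoneOn_log_sub_add_sq ht0 (mem_Ioi.2 one_pos) ht1.le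
  rw [logRemainderRatio, le_div_iff₀ (by nlinarith)]
  linarith

lemma logRemainderRatio_le_half {t : ℝ} (ht1 : 1 < t) : logRemainderRatio t ≤ 1 / 2 := by
  have hk : 0 ≤ log t - (t - 1) + (t - 1) ^ 2 / 2 := by
    simpa using monotoneOn_log_sub_add_sq (mem_Ioi.2 one_pos) (mem_Ioi.2 (one_pos.trans ht1)) ht1.le
  rw [logRemainderRatio, div_le_iff₀ (by nlinarith)]
  linarith

-- `logRemainderRatio 1 = 0 / 0 = 0` is a junk value, not the limit `1 / 2`, so `1` is excluded;
-- the two branches are bridged by the value `1 / 2`.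
lemma antitoneOn_logRemainderRatio : AntitoneOn logRemainderRatio (Ioi 0 \ {1}) := by
  rintro s ⟨hs0 : 0 < s, hs1 : s ≠ 1⟩ t ⟨-, ht1 : t ≠ 1⟩ hst
  rcases hs1.lt_or_gt with hs1 | hs1
  · rcases ht1.lt_or_gt with ht1 | ht1
    · exact antitoneOn_logRemainderRatio_Ioo ⟨hs0, hs1⟩ ⟨hs0.trans_le hst, ht1⟩ hst
    · exact (logRemainderRatio_le_half ht1).trans (half_le_logRemainderRatio hs0 hs1)
  · exact antitoneOn_logRemainderRatio_Ioi hs1 (hs1.trans_le hst) hst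

-- The paper's `h(x; c)`; at `x = c` division by zero gives `0`, not the limit `1 / (2 c²)`.
noncomputable def amgmH (c x : ℝ) : ℝ := (-log x + log c) / (x - c) ^ 2 + 1 / (c * (x - c))

lemma amgmH_eq_logRemainderRatio {c x : ℝ} (hc : 0 < c) (hx : 0 < x) :
    amgmH c x = logRemainderRatio (x / c) / c ^ 2 := by
  rcases eq_or_ne x c with rfl | hxc
  · simp [amgmH, logRemainderRatio, div_self hx.ne']
  rw [amgmH, logRemainderRatio, log_div hx.ne' hc.ne']
  field_simp
  ring

lemma log_sub_log_add_div_eq_sq_mul_amgmH {c : ℝ} (hc : c ≠ 0) (x : ℝ) :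
    log c - log x + (x - c) / c = (x - c) ^ 2 * amgmH c x := by
  rcases eq_or_ne x c with rfl | hxc
  · simp
  rw [amgmH]
  field_simp
  ring

lemma amgmH_le_of_le {c x y : ℝ} (hc : 0 < c) (hx : 0 < x) (hxy : x ≤ y) (hxc : x ≠ c)
    (hyc : y ≠ c) : amgmH c y ≤ amgmH c x := by
  have hmem : ∀ z, 0 < z → z ≠ c → z / c ∈ Set.Ioi 0 \ {1} := fun z hz hzc ↦
    ⟨div_pos hz hc, fun h ↦ hzc ((div_eq_one_iff_eq hc.ne').mp h)⟩
  have hy := hx.trans_le hxy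
  rw [amgmH_eq_logRemainderRatio hc hx, amgmH_eq_logRemainderRatio hc hy]
  gcongr
  exact antitoneOn_logRemainderRatio (hmem x hx hxc) (hmem y hy hyc)
    (div_le_div_of_nonneg_right hxy hc.le)

lemma sq_mul_amgmH_le_log_sub_log_add_div {c x b : ℝ} (hc : 0 < c) (hx : 0 < x) (hxb : x ≤ b)
    (hbc : b ≠ c) : (x - c) ^ 2 * amgmH c b ≤ log c - log x + (x - c) / c := by
  rw [log_sub_log_add_div_eq_sq_mul_amgmH hc.ne']
  rcases eq_or_ne x c with rfl | hxc
  · simp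
  exact mul_le_mul_of_nonneg_left (amgmH_le_of_le hc hx hxb hxc hbc) (sq_nonneg _)

lemma log_sub_log_add_div_le_sq_mul_amgmH {c x a : ℝ} (hc : 0 < c) (ha : 0 < a) (hax : a ≤ x)
    (hac : a ≠ c) : log c - log x + (x - c) / c ≤ (x - c) ^ 2 * amgmH c a := by
  rw [log_sub_log_add_div_eq_sq_mul_amgmH hc.ne']
  rcases eq_or_ne x c with rfl | hxc
  · simp
  exact mul_le_mul_of_nonneg_left (amgmH_le_of_le hc ha hax hac hxc) (sq_nonneg _)

lemma log_div_geomMean_eq {ι : Type*} [Fintype ι] {x : ι → ℝ} (hx : ∀ i, 0 < x i) {c : ℝ}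
    (hc0 : c ≠ 0) (hc : c = (∑ i, x i) / Fintype.card ι) :
    log (c / (∏ i, x i) ^ ((1 : ℝ) / Fintype.card ι)) =
      (∑ i, (log c - log (x i) + (x i - c) / c)) / Fintype.card ι := by
  have hcard : (Fintype.card ι : ℝ) ≠ 0 := fun h ↦ hc0 (by rw [hc, h, div_zero])
  have hsum : ∑ i, x i = Fintype.card ι * c := by rw [hc]; field_simp
  rw [log_div hc0 (rpow_pos_of_pos (prod_pos fun i _ ↦ hx i) _).ne',
    log_rpow (prod_pos fun i _ ↦ hx i), log_prod fun i _ ↦ (hx i).ne', sum_add_distrib,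
    sum_sub_distrib, ← sum_div, sum_sub_distrib, hsum]
  simp only [sum_const, card_univ, nsmul_eq_mul]
  field_simp
  ring

lemma forall_eq_of_forall_le_of_mean_eq {ι : Type*} [Fintype ι] {x : ι → ℝ} {a : ℝ}
    (hax : ∀ i, a ≤ x i) (hmean : (∑ i, x i) / Fintype.card ι = a) (i : ι) : x i = a := by
  have hcard : (Fintype.card ι : ℝ) ≠ 0 := Nat.cast_ne_zero.mpr (Fintype.card_pos_iff.mpr ⟨i⟩).ne'
  have hsum : ∑ j, (x j - a) = 0 := by
    rw [sum_sub_distrib, sum_const, card_univ, nsmul_eq_mul, ← hmean]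
    field_simp
    ring
  have := (sum_eq_zero_iff_of_nonneg fun j _ ↦ sub_nonneg.mpr (hax j)).mp hsum i (mem_univ i)
  linarith

lemma ne_mean_of_forall_le {ι : Type*} [Fintype ι] {x : ι → ℝ} {a : ℝ} (hax : ∀ i, a ≤ x i)
    (hne : ∃ i j, x i ≠ x j) : a ≠ (∑ i, x i) / Fintype.card ι := by
  obtain ⟨i, j, hij⟩ := hne
  intro hmean
  exact hij ((forall_eq_of_forall_le_of_mean_eq hax hmean.symm i).trans
    (forall_eq_of_forall_le_of_mean_eq hax hmean.symm j).symm)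

lemma ne_mean_of_forall_ge {ι : Type*} [Fintype ι] {x : ι → ℝ} {b : ℝ} (hxb : ∀ i, x i ≤ b)
    (hne : ∃ i j, x i ≠ x j) : b ≠ (∑ i, x i) / Fintype.card ι := by
  have := ne_mean_of_forall_le (x := -x) (fun i ↦ neg_le_neg (hxb i)) (by simpa using hne)
  rwa [Pi.neg_def, sum_neg_distrib, neg_div, ne_eq, neg_inj] at this

theorem stmt_12_general (n : ℕ) (x : Fin n → ℝ) (hx : ∀ i, 0 < x i)
    (a b : ℝ) (ha : IsLeast (Set.range x) a) (hb : IsGreatest (Set.range x) b)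
    (hne : ∃ i j, x i ≠ x j)
    (xbar G S2 : ℝ)
    (hxbar : xbar = (∑ i, x i) / n)
    (hG : G = (∏ i, x i) ^ ((1 : ℝ) / n))
    (hS2 : S2 = (∑ i, (x i - xbar) ^ 2) / n) :
    Real.exp (S2 * ((-Real.log b + Real.log xbar) / (b - xbar) ^ 2 +
        1 / (xbar * (b - xbar)))) ≤ xbar / G ∧
      xbar / G ≤ Real.exp (S2 * ((-Real.log a + Real.log xbar) / (a - xbar) ^ 2 +
        1 / (xbar * (a - xbar)))) := by
  have hax : ∀ k, a ≤ x k := fun k ↦ ha.2 ⟨k, rfl⟩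
  have hxb : ∀ k, x k ≤ b := fun k ↦ hb.2 ⟨k, rfl⟩
  have ha0 : 0 < a := by obtain ⟨k, rfl⟩ := ha.1; exact hx k
  have : Nonempty (Fin n) := by obtain ⟨i, -⟩ := hne; exact ⟨i⟩
  have hn : (0 : ℝ) < n := Nat.cast_pos.mpr Fin.pos'
  have hc : 0 < xbar := hxbar ▸ div_pos (sum_pos (fun k _ ↦ hx k) univ_nonempty) hn
  have hac : a ≠ xbar := by
    simpa only [Fintype.card_fin, ← hxbar] using ne_mean_of_forall_le hax hne
  have hbc : b ≠ xbar := by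
    simpa only [Fintype.card_fin, ← hxbar] using ne_mean_of_forall_ge hxb hne
  have hlog : log (xbar / G) = (∑ k, (log xbar - log (x k) + (x k - xbar) / xbar)) / n := by
    simpa only [Fintype.card_fin, ← hG] using
      log_div_geomMean_eq hx hc.ne' (by rwa [Fintype.card_fin])
  have hlower : S2 * amgmH xbar b ≤ log (xbar / G) := by
    rw [hlog, hS2, div_mul_eq_mul_div, sum_mul]
    gcongr with k
    exact sq_mul_amgmH_le_log_sub_log_add_div hc (hx k) (hxb k) hbc
  have hupper : log (xbar / G) ≤ S2 * amgmH xbar a := by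
    rw [hlog, hS2, div_mul_eq_mul_div, sum_mul]
    gcongr with k
    exact log_sub_log_add_div_le_sq_mul_amgmH hc ha0 (hax k) hac
  have hpos : 0 < xbar / G := div_pos hc (hG ▸ rpow_pos_of_pos (prod_pos fun k _ ↦ hx k) _)
  exact ⟨(exp_le_exp.2 hlower).trans_eq (exp_log hpos),
    (exp_log hpos).symm.trans_le (exp_le_exp.2 hupper)⟩

/-- Sharpened AM-GM: for positive data (not all equal), with
`h(x;x̄) = (-log x + log x̄)/(x-x̄)² + 1/(x̄(x-x̄))`,
`exp(S² h(b;x̄)) ≤ x̄/Ḡ ≤ exp(S² h(a;x̄))`. -/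
theorem stmt_12 (n : ℕ) (hn : 0 < n) (x : Fin n → ℝ) (hx : ∀ i, 0 < x i)
    (a b : ℝ) (ha : IsLeast (Set.range x) a) (hb : IsGreatest (Set.range x) b)
    (hne : ∃ i j, x i ≠ x j)
    (xbar G S2 : ℝ)
    (hxbar : xbar = (∑ i, x i) / n)
    (hG : G = (∏ i, x i) ^ ((1 : ℝ) / n))
    (hS2 : S2 = (∑ i, (x i - xbar) ^ 2) / n) :
    Real.exp (S2 * ((-Real.log b + Real.log xbar) / (b - xbar) ^ 2 +
        1 / (xbar * (b - xbar)))) ≤ xbar / G ∧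
      xbar / G ≤ Real.exp (S2 * ((-Real.log a + Real.log xbar) / (a - xbar) ^ 2 +
        1 / (xbar * (a - xbar)))) :=
  stmt_12_general n x hx a b ha hb hne xbar G S2 hxbar hG hS2
end

section
/- Let X be a positive random variable on (a,b) ⊂ (0,∞) with mean μ, finite variance, and finite E[X^{-1}]. Define h(y;μ) = (y^{-1} - μ^{-1})/(y-μ)² + μ^{-2}/(y-μ). Then ((E[X])^{-1} + lim_{y→a} h(y;μ)·Var(X))^{-1} ≤ (E[X^{-1}])^{-1} ≤ ((E[X])^{-1} + lim_{y→b} h(y;μ)·Var(X))^{-1}, sharpening the harmonic–arithmetic mean inequality. -/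
/-!
Since `h(y;μ) = (y μ²)⁻¹`, the claim is the two-sided bound
`μ⁻¹ + Var X / (b μ²) ≤ E[X⁻¹] ≤ μ⁻¹ + Var X / (a μ²)`, inverted.
It comes from integrating the identity `x⁻¹ - μ⁻¹ + (x - μ)/μ² = (x - μ)² / (x μ²)`
and bounding `1/X` between `1/b` and `1/a` on the right-hand side.
-/

open MeasureTheory Set

section FieldIdentities

variable {K : Type*} [Field K]

lemma sq_sub_div_eq {x : K} (hx : x ≠ 0) (c : K) : (x - c) ^ 2 / x = x - 2 * c + c ^ 2 * x⁻¹ := by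
  field_simp
  ring

lemma inv_sub_inv_div_sq_add_inv_sq_div {y μ : K} (hy : y ≠ 0) (hμ : μ ≠ 0) (hyμ : y ≠ μ) :
    (y⁻¹ - μ⁻¹) / (y - μ) ^ 2 + μ⁻¹ ^ 2 / (y - μ) = (y * μ ^ 2)⁻¹ := by
  have : y - μ ≠ 0 := sub_ne_zero.mpr hyμ
  field_simp
  ring

end FieldIdentities

namespace MeasureTheory

variable {Ω : Type*} [MeasurableSpace Ω] {P : Measure Ω} {X : Ω → ℝ}

lemma integral_pos_of_ae_pos [NeZero P] {f : Ω → ℝ} (hfi : Integrable f P)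
    (hf : ∀ᵐ ω ∂P, 0 < f ω) : 0 < ∫ ω, f ω ∂P := by
  rw [integral_pos_iff_support_of_nonneg_ae (hf.mono fun _ h => h.le) hfi]
  have hsupp : ∀ᵐ ω ∂P, ω ∈ Function.support f := hf.mono fun _ h => h.ne'
  rw [measure_congr (ae_eq_univ.mpr hsupp : Function.support f =ᵐ[P] univ)]
  exact Measure.measure_univ_pos.mpr (NeZero.ne P)

lemma integral_mem_Ioo [IsProbabilityMeasure P] {a b : ℝ} (hX : ∀ᵐ ω ∂P, X ω ∈ Ioo a b)
    (hXint : Integrable X P) : ∫ ω, X ω ∂P ∈ Ioo a b := by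
  have hlow : 0 < ∫ ω, (X ω - a) ∂P :=
    integral_pos_of_ae_pos (hXint.sub (integrable_const a)) (hX.mono fun _ h => sub_pos.mpr h.1)
  have hupp : 0 < ∫ ω, (b - X ω) ∂P :=
    integral_pos_of_ae_pos ((integrable_const b).sub hXint) (hX.mono fun _ h => sub_pos.mpr h.2)
  rw [integral_sub hXint (integrable_const a)] at hlow
  rw [integral_sub (integrable_const b) hXint] at hupp
  simp only [integral_const, probReal_univ, one_smul] at hlow hupp
  exact ⟨by linarith, by linarith⟩

lemma sq_sub_div_ae_eq (hX : ∀ᵐ ω ∂P, X ω ≠ 0) (c : ℝ) :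
    (fun ω => (X ω - c) ^ 2 / X ω) =ᵐ[P] fun ω => X ω - 2 * c + c ^ 2 * (X ω)⁻¹ :=
  hX.mono fun _ hx => sq_sub_div_eq hx c

lemma integrable_sq_sub_div [IsFiniteMeasure P] (hX : ∀ᵐ ω ∂P, X ω ≠ 0)
    (hXint : Integrable X P) (hinv : Integrable (fun ω => (X ω)⁻¹) P) (c : ℝ) :
    Integrable (fun ω => (X ω - c) ^ 2 / X ω) P :=
  ((hXint.sub (integrable_const _)).add (hinv.const_mul _)).congr (sq_sub_div_ae_eq hX c).symm

lemma integral_sq_sub_div [IsProbabilityMeasure P] (hX : ∀ᵐ ω ∂P, X ω ≠ 0)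
    (hXint : Integrable X P) (hinv : Integrable (fun ω => (X ω)⁻¹) P) (c : ℝ) :
    ∫ ω, (X ω - c) ^ 2 / X ω ∂P = ∫ ω, X ω ∂P - 2 * c + c ^ 2 * ∫ ω, (X ω)⁻¹ ∂P := by
  have hlin : Integrable (fun ω => X ω - 2 * c) P := hXint.sub (integrable_const _)
  rw [integral_congr_ae (sq_sub_div_ae_eq hX c), integral_add hlin (hinv.const_mul _),
    integral_sub hXint (integrable_const _), integral_const, integral_const_mul]
  simp

lemma integral_sq_sub_div_mem_Icc {a b c : ℝ} (ha : 0 < a) (hX : ∀ᵐ ω ∂P, X ω ∈ Icc a b)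
    (hsq : Integrable (fun ω => (X ω - c) ^ 2) P)
    (hint : Integrable (fun ω => (X ω - c) ^ 2 / X ω) P) :
    ∫ ω, (X ω - c) ^ 2 / X ω ∂P ∈
      Icc ((∫ ω, (X ω - c) ^ 2 ∂P) / b) ((∫ ω, (X ω - c) ^ 2 ∂P) / a) := by
  rw [← integral_div, ← integral_div]
  refine ⟨integral_mono_ae (hsq.div_const _) hint ?_, integral_mono_ae hint (hsq.div_const _) ?_⟩
  all_goals
    filter_upwards [hX] with ω ⟨haX, hXb⟩
    have hXpos : 0 < X ω := ha.trans_le haX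
    gcongr

theorem integral_inv_mem_Icc [IsProbabilityMeasure P] {a b μ : ℝ} (ha : 0 < a)
    (hX : ∀ᵐ ω ∂P, X ω ∈ Icc a b) (hXint : Integrable X P) (hmean : ∫ ω, X ω ∂P = μ)
    (hX2 : Integrable (fun ω => X ω ^ 2) P) (hinv : Integrable (fun ω => (X ω)⁻¹) P)
    (hμ : μ ≠ 0) :
    ∫ ω, (X ω)⁻¹ ∂P ∈
      Icc (μ⁻¹ + (b * μ ^ 2)⁻¹ * ∫ ω, (X ω - μ) ^ 2 ∂P)
        (μ⁻¹ + (a * μ ^ 2)⁻¹ * ∫ ω, (X ω - μ) ^ 2 ∂P) := by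
  have hX0 : ∀ᵐ ω ∂P, X ω ≠ 0 := hX.mono fun _ h => (ha.trans_le h.1).ne'
  have hsq : Integrable (fun ω => (X ω - μ) ^ 2) P := by
    simp_rw [sub_sq]
    exact (hX2.sub ((hXint.const_mul 2).mul_const μ)).add (integrable_const _)
  have hbounds := integral_sq_sub_div_mem_Icc ha hX hsq (integrable_sq_sub_div hX0 hXint hinv μ)
  rw [integral_sq_sub_div hX0 hXint hinv μ, hmean] at hbounds
  have hμ2 : 0 < μ ^ 2 := by positivity
  have hform : ∀ y, μ⁻¹ + (y * μ ^ 2)⁻¹ * ∫ ω, (X ω - μ) ^ 2 ∂P =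
      (μ + (∫ ω, (X ω - μ) ^ 2 ∂P) / y) / μ ^ 2 := fun y => by
    rw [add_div, mul_inv]
    field_simp
  rw [hform, hform, mem_Icc, div_le_iff₀ hμ2, le_div_iff₀ hμ2]
  exact ⟨by linarith [hbounds.1], by linarith [hbounds.2]⟩

end MeasureTheory

theorem stmt_15_general {Ω : Type*} [MeasureSpace Ω] [IsProbabilityMeasure (volume : Measure Ω)]
    (a b : ℝ) (ha : 0 < a) (X : Ω → ℝ) (μ : ℝ)
    (hX : ∀ᵐ ω, X ω ∈ Ioo a b)
    (hXint : Integrable X) (hmean : ∫ ω, X ω = μ)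
    (hX2 : Integrable (fun ω => (X ω) ^ 2))
    (hinv : Integrable (fun ω => (X ω)⁻¹)) :
    (μ⁻¹ + ((a⁻¹ - μ⁻¹) / (a - μ) ^ 2 + μ⁻¹ ^ 2 / (a - μ)) *
        (∫ ω, (X ω - μ) ^ 2))⁻¹ ≤ (∫ ω, (X ω)⁻¹)⁻¹ ∧
      (∫ ω, (X ω)⁻¹)⁻¹ ≤
        (μ⁻¹ + ((b⁻¹ - μ⁻¹) / (b - μ) ^ 2 + μ⁻¹ ^ 2 / (b - μ)) *
          (∫ ω, (X ω - μ) ^ 2))⁻¹ := by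
  obtain ⟨hμa, hμb⟩ : μ ∈ Ioo a b := hmean ▸ integral_mem_Ioo hX hXint
  have hμ : 0 < μ := ha.trans hμa
  rw [inv_sub_inv_div_sq_add_inv_sq_div ha.ne' hμ.ne' hμa.ne,
    inv_sub_inv_div_sq_add_inv_sq_div (hμ.trans hμb).ne' hμ.ne' hμb.ne']
  obtain ⟨hlow, hupp⟩ := integral_inv_mem_Icc ha (hX.mono fun _ h => Ioo_subset_Icc_self h)
    hXint hmean hX2 hinv hμ.ne'
  have hlow_pos : 0 < μ⁻¹ + ((b * μ ^ 2)⁻¹ * ∫ ω, (X ω - μ) ^ 2) := by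
    have hb : 0 < b := hμ.trans hμb
    positivity
  exact ⟨inv_anti₀ (hlow_pos.trans_le hlow) hupp, inv_anti₀ hlow_pos hlow⟩

/-- Sharpened harmonic–arithmetic mean inequality: with
`h(y;μ) = (y⁻¹-μ⁻¹)/(y-μ)² + μ⁻²/(y-μ)` (decreasing in `y`),
`(μ⁻¹ + h(a;μ)·Var X)⁻¹ ≤ (E[X⁻¹])⁻¹ ≤ (μ⁻¹ + h(b;μ)·Var X)⁻¹`. -/
theorem stmt_15 {Ω : Type*} [MeasureSpace Ω] [IsProbabilityMeasure (volume : Measure Ω)]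
    (a b : ℝ) (ha : 0 < a) (hab : a < b) (X : Ω → ℝ) (μ : ℝ)
    (hX : ∀ᵐ ω, X ω ∈ Ioo a b)
    (hXint : Integrable X) (hmean : ∫ ω, X ω = μ)
    (hX2 : Integrable (fun ω => (X ω) ^ 2))
    (hinv : Integrable (fun ω => (X ω)⁻¹)) :
    (μ⁻¹ + ((a⁻¹ - μ⁻¹) / (a - μ) ^ 2 + μ⁻¹ ^ 2 / (a - μ)) *
        (∫ ω, (X ω - μ) ^ 2))⁻¹ ≤ (∫ ω, (X ω)⁻¹)⁻¹ ∧
      (∫ ω, (X ω)⁻¹)⁻¹ ≤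
        (μ⁻¹ + ((b⁻¹ - μ⁻¹) / (b - μ) ^ 2 + μ⁻¹ ^ 2 / (b - μ)) *
          (∫ ω, (X ω - μ) ^ 2))⁻¹ :=
  stmt_15_general a b ha X μ hX hXint hmean hX2 hinv
end

section
/- Let θ̂ be a random variable with P(θ̂ ∈ (a,b)) = 1, T a sub-σ-algebra, θ̂* = E[θ̂|T], and L : (a,b) → ℝ twice differentiable with L'' ≥ 2c on (a,b) for some constant c ≥ 0. Then E[L(θ̂)] - E[L(θ̂*)] ≥ c · E[Var(θ̂ | T)]. -/
/-!
With `g y = L y - c * y ^ 2`, the bound `L'' ≥ 2c` makes `g` convex on `(a, b)`, and the claim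
is `E[g(θ̂*)] ≤ E[g(θ̂)]`: conditional Jensen for `g`, integrated. Since `(a, b)` is open (where
`ConvexOn.map_condExp_le` needs a closed domain), Jensen is proved directly: `g` is the supremum
of its tangent lines at rational points, each of which commutes with conditional expectation,
and `θ̂*` stays in `(a, b)` almost surely.
-/

open MeasureTheory Set Filter Topology

namespace ConvexOn

variable {f : ℝ → ℝ}

theorem add_deriv_mul_sub_le {S : Set ℝ} (hf : ConvexOn ℝ S f) {x y : ℝ}
    (hx : x ∈ S) (hy : y ∈ S) (hd : DifferentiableAt ℝ f y) :
    f y + deriv f y * (x - y) ≤ f x := by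
  rcases lt_trichotomy x y with h | rfl | h
  · have hs := hf.slope_le_deriv hx hy h hd
    rw [slope_def_field, div_le_iff₀ (sub_pos.2 h)] at hs
    linarith
  · simp
  · have hs := hf.deriv_le_slope hy hx h hd
    rw [slope_def_field, le_div_iff₀ (sub_pos.2 h)] at hs
    linarith

theorem le_of_forall_rat_tangent_le {a b : ℝ} (hf : ConvexOn ℝ (Ioo a b) f)
    (hfd : ∀ x ∈ Ioo a b, DifferentiableAt ℝ f x) {x M : ℝ} (hx : x ∈ Ioo a b)
    (h : ∀ q : ℚ, (q : ℝ) ∈ Ioo a b → f q + deriv f q * (x - q) ≤ M) : f x ≤ M := by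
  by_contra! hMx
  obtain ⟨p, hap, hpx⟩ := exists_between hx.1
  have hp : p ∈ Ioo a b := ⟨hap, hpx.trans hx.2⟩
  -- For `q ∈ (p, x)`, monotonicity of `deriv f` puts the tangent at `q` above this line at `x`.
  have hcont : ContinuousAt (fun y => f y + deriv f p * (x - y)) x := by
    have := (hfd x hx).continuousAt
    fun_prop
  have hnear : ∀ᶠ y in 𝓝[<] x, M < f y + deriv f p * (x - y) ∧ y ∈ Ioo p x := by
    refine ((hcont.eventually (eventually_gt_nhds ?_)).filter_mono nhdsWithin_le_nhds).and
      (Ioo_mem_nhdsLT hpx)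
    simpa using hMx
  obtain ⟨l, hlx, hl⟩ := mem_nhdsLT_iff_exists_Ioo_subset.1 hnear
  obtain ⟨q, hlq, hqx⟩ := exists_rat_btwn (mem_Iio.1 hlx)
  obtain ⟨hMq, hpq, -⟩ := hl ⟨hlq, hqx⟩
  have hq : (q : ℝ) ∈ Ioo a b := ⟨hap.trans hpq, hqx.trans hx.2⟩
  have hmono : deriv f p * (x - q) ≤ deriv f q * (x - q) :=
    mul_le_mul_of_nonneg_right (hf.monotoneOn_deriv hfd hp hq hpq.le) (sub_pos.2 hqx).le
  linarith [h q hq]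

end ConvexOn

section CondExp

variable {Ω : Type*} {m m0 : MeasurableSpace Ω} {μ : Measure Ω} [IsFiniteMeasure μ] {X : Ω → ℝ}

theorem ae_lt_condExp_of_ae_lt (hm : m ≤ m0) {a : ℝ} (hX : ∀ᵐ ω ∂μ, a < X ω)
    (hXi : Integrable X μ) : ∀ᵐ ω ∂μ, a < μ[X|m] ω := by
  set A := {ω | μ[X|m] ω ≤ a}
  have hAm : MeasurableSet[m] A := measurableSet_le stronglyMeasurable_condExp.measurable
    measurable_const
  have hconst : IntegrableOn (fun _ => a) A μ := (integrable_const a).integrableOn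
  have hle : ∫ ω in A, (X ω - a) ∂μ ≤ 0 := by
    rw [integral_sub hXi.integrableOn hconst, ← setIntegral_condExp hm hXi hAm, sub_nonpos]
    exact setIntegral_mono_on integrable_condExp.integrableOn hconst (hm _ hAm) fun ω hω => hω
  have hpos : ∀ᵐ ω ∂μ.restrict A, 0 < X ω - a := ae_restrict_of_ae (hX.mono fun ω => sub_pos.2)
  have hzero : (fun ω => X ω - a) =ᵐ[μ.restrict A] 0 :=
    (integral_eq_zero_iff_of_nonneg_ae (hpos.mono fun ω => le_of_lt)
      (hXi.integrableOn.sub hconst)).1 (le_antisymm hle (integral_nonneg_of_ae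
        (hpos.mono fun ω => le_of_lt)))
  have hA : μ A = 0 := by
    have : ∀ᵐ ω ∂μ.restrict A, False := by
      filter_upwards [hzero, hpos] with ω h0 hp
      exact hp.ne' h0
    simpa using Measure.restrict_eq_zero.1 (ae_eq_bot.1 (eventually_false_iff_eq_bot.1 this))
  exact measure_eq_zero_iff_ae_notMem.1 hA |>.mono fun ω hω => not_le.1 hω

theorem condExp_mem_Ioo (hm : m ≤ m0) {a b : ℝ} (hX : ∀ᵐ ω ∂μ, X ω ∈ Ioo a b)
    (hXi : Integrable X μ) : ∀ᵐ ω ∂μ, μ[X|m] ω ∈ Ioo a b := by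
  have hlow := ae_lt_condExp_of_ae_lt hm (hX.mono fun ω h => h.1) hXi
  have hup := ae_lt_condExp_of_ae_lt (m := m) (X := -X) hm (hX.mono fun ω h => neg_lt_neg h.2)
    hXi.neg
  filter_upwards [hlow, hup, condExp_neg X m] with ω hl hu hneg
  rw [hneg, Pi.neg_apply] at hu
  exact ⟨hl, neg_lt_neg_iff.1 hu⟩

theorem ConvexOn.map_condExp_le_Ioo (hm : m ≤ m0) {f : ℝ → ℝ} {a b : ℝ}
    (hf : ConvexOn ℝ (Ioo a b) f) (hfd : ∀ x ∈ Ioo a b, DifferentiableAt ℝ f x)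
    (hX : ∀ᵐ ω ∂μ, X ω ∈ Ioo a b) (hXi : Integrable X μ) (hfXi : Integrable (f ∘ X) μ) :
    f ∘ μ[X|m] ≤ᵐ[μ] μ[f ∘ X|m] := by
  have htangent : ∀ᵐ ω ∂μ, ∀ q : ℚ, (q : ℝ) ∈ Ioo a b →
      f q + deriv f q * (μ[X|m] ω - q) ≤ μ[f ∘ X|m] ω := by
    refine ae_all_iff.2 fun q => ?_
    by_cases hq : (q : ℝ) ∈ Ioo a b
    swap
    · exact .of_forall fun ω hq' => absurd hq' hq
    set T : ℝ →L[ℝ] ℝ := ContinuousLinearMap.mul ℝ ℝ (deriv f q)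
    set α := f q - deriv f q * q
    have hlin := T.comp_condExp_add_const_comm hm hXi α
    have hmono := condExp_mono (m := m) (f := fun y => T (X y) + α)
      ((T.integrable_comp hXi).add (integrable_const α)) hfXi (hX.mono fun ω hω => by
        have := hf.add_deriv_mul_sub_le hω hq (hfd q hq)
        show deriv f q * X ω + α ≤ f (X ω)
        linarith)
    filter_upwards [hlin, hmono] with ω hl hle _
    have key : deriv f q * μ[X|m] ω + α ≤ μ[f ∘ X|m] ω := hl.le.trans hle
    linarith
  filter_upwards [htangent, condExp_mem_Ioo hm hX hXi] with ω h hω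
  exact hf.le_of_forall_rat_tangent_le hfd hω h

end CondExp

theorem convexOn_sub_mul_sq_of_deriv2_ge {L : ℝ → ℝ} {a b c : ℝ}
    (hdiff : ∀ x ∈ Ioo a b, DifferentiableAt ℝ L x ∧ DifferentiableAt ℝ (deriv L) x)
    (hL'' : ∀ x ∈ Ioo a b, 2 * c ≤ deriv (deriv L) x) :
    ConvexOn ℝ (Ioo a b) (fun y => L y - c * y ^ 2) := by
  refine convexOn_of_hasDerivWithinAt2_nonneg (f' := fun y => deriv L y - 2 * c * y)
    (f'' := fun y => deriv (deriv L) y - 2 * c) (convex_Ioo a b) ?_ ?_ ?_ ?_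
  · exact fun x hx => ((hdiff x hx).1.continuousAt.sub (by fun_prop)).continuousWithinAt
  all_goals rw [interior_Ioo]
  · intro x hx
    exact (((hdiff x hx).1.hasDerivAt.sub ((hasDerivAt_pow 2 x).const_mul c)).congr_deriv
      (by ring)).hasDerivWithinAt
  · intro x hx
    exact (((hdiff x hx).2.hasDerivAt.sub ((hasDerivAt_id x).const_mul (2 * c))).congr_deriv
      (by ring)).hasDerivWithinAt
  · exact fun x hx => sub_nonneg.2 (hL'' x hx)

theorem stmt_17_general {Ω : Type*} {m0 : MeasurableSpace Ω} (P : Measure Ω)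
    [IsProbabilityMeasure P]
    (m : MeasurableSpace Ω) (hm : m ≤ m0)
    (a b : ℝ) (est : Ω → ℝ)
    (hbound : ∀ᵐ ω ∂P, est ω ∈ Ioo a b)
    (hest : MemLp est 2 P)
    (L : ℝ → ℝ) (c : ℝ)
    (hdiff : ∀ x ∈ Ioo a b, DifferentiableAt ℝ L x ∧ DifferentiableAt ℝ (deriv L) x)
    (hL'' : ∀ x ∈ Ioo a b, 2 * c ≤ deriv (deriv L) x)
    (hint1 : Integrable (fun ω => L (est ω)) P)
    (hint2 : Integrable (fun ω => L ((P[est|m]) ω)) P) :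
    (∫ ω, L (est ω) ∂P) - ∫ ω, L ((P[est|m]) ω) ∂P ≥
      c * ∫ ω, ((P[fun ω' => (est ω') ^ 2|m]) ω - ((P[est|m]) ω) ^ 2) ∂P := by
  set g : ℝ → ℝ := fun y => L y - c * y ^ 2
  have hgd : ∀ x ∈ Ioo a b, DifferentiableAt ℝ g x := fun x hx =>
    (hdiff x hx).1.sub (by fun_prop)
  have hsq := hest.integrable_sq
  have hsq' := (hest.condExp (m := m) one_le_two).integrable_sq
  have hjensen := (convexOn_sub_mul_sq_of_deriv2_ge hdiff hL'').map_condExp_le_Ioo hm hgd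
    hbound (hest.integrable one_le_two) (hint1.sub (hsq.const_mul c))
  have hmean : ∫ ω, g (P[est|m] ω) ∂P ≤ ∫ ω, g (est ω) ∂P :=
    (integral_mono_ae (hint2.sub (hsq'.const_mul c)) integrable_condExp hjensen).trans_eq
      (integral_condExp hm)
  simp only [g] at hmean
  rw [integral_sub hint1 (hsq.const_mul c), integral_sub hint2 (hsq'.const_mul c),
    integral_const_mul, integral_const_mul] at hmean
  rw [integral_sub integrable_condExp hsq', integral_condExp hm]
  linarith

/-- Sharpened Rao–Blackwell: if the loss `L` is twice differentiable with `L'' ≥ 2c ≥ 0`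
on `(a,b)` and `θ̂*` is the conditional expectation of `θ̂`, then
`E[L(θ̂)] - E[L(θ̂*)] ≥ c · E[Var(θ̂|T)]`. -/
theorem stmt_17 {Ω : Type*} {m0 : MeasurableSpace Ω} (P : Measure Ω)
    [IsProbabilityMeasure P]
    (m : MeasurableSpace Ω) (hm : m ≤ m0)
    (a b : ℝ) (hab : a < b) (est : Ω → ℝ)
    (hbound : ∀ᵐ ω ∂P, est ω ∈ Ioo a b)
    (hest : MemLp est 2 P)
    (L : ℝ → ℝ) (c : ℝ) (hc : 0 ≤ c)
    (hdiff : ∀ x ∈ Ioo a b, DifferentiableAt ℝ L x ∧ DifferentiableAt ℝ (deriv L) x)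
    (hL'' : ∀ x ∈ Ioo a b, 2 * c ≤ deriv (deriv L) x)
    (hint1 : Integrable (fun ω => L (est ω)) P)
    (hint2 : Integrable (fun ω => L ((P[est|m]) ω)) P) :
    (∫ ω, L (est ω) ∂P) - ∫ ω, L ((P[est|m]) ω) ∂P ≥
      c * ∫ ω, ((P[fun ω' => (est ω') ^ 2|m]) ω - ((P[est|m]) ω) ^ 2) ∂P :=
  stmt_17_general P m hm a b est hbound hest L c hdiff hL'' hint1 hint2
end
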